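/- arXiv:2012.15167 — 4 statements merged into one kernel-verified Lean document; each statement's English description precedes it below -/
import Mathlib

section
/- For every infinite cardinal κ, the product of the beth numbers ∏_{α<κ} ℶ_α equals ℶ_{κ+1}. -/
/-!
Each factor `ℶ_α` with `α < κ` is at most `2 ^ ℶ_κ`, and there are `|κ| ≤ ℶ_κ` factors, so the
product is at most `(2 ^ ℶ_κ) ^ ℶ_κ = 2 ^ ℶ_κ = ℶ_{κ+1}`. Conversely `ℶ_κ = sup ℶ_α ≤ ∑ ℶ_α`, hence
`2 ^ ℶ_κ ≤ ∏ 2 ^ ℶ_α = ∏ ℶ_{α+1}`; as `κ` is a limit ordinal, `α ↦ α + 1` maps the index set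
injectively into itself, so this last product is at most `∏ ℶ_α`.
-/

open Cardinal Set Order

namespace Cardinal

theorem prod_comp_equiv {ι ι' : Type u} (e : ι ≃ ι') (f : ι' → Cardinal.{v}) :
    prod (f ∘ e) = prod f :=
  mk_congr (e.piCongrLeft fun j => (f j).out)

theorem prod_subtype_le_prod {ι : Type u} {f : ι → Cardinal.{v}} (hf : ∀ i, f i ≠ 0)
    (s : Set ι) : prod (fun i : s => f i) ≤ prod f := by
  have hne : ∀ i, Nonempty (f i).out := fun i => mk_ne_zero_iff.1 (by rw [mk_out]; exact hf i)
  classical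
  refine mk_le_of_surjective (f := fun x i => x i) fun y => ?_
  exact ⟨fun i => if hi : i ∈ s then y ⟨i, hi⟩ else (hne i).some, funext fun i => dif_pos i.2⟩

theorem prod_comp_le_prod_of_injective {ι ι' : Type u} {f : ι' → Cardinal.{v}}
    (hf : ∀ j, f j ≠ 0) {g : ι → ι'} (hg : Function.Injective g) : prod (f ∘ g) ≤ prod f :=
  calc prod (f ∘ g) = prod (fun j : range g => f j) :=
        prod_comp_equiv (Equiv.ofInjective g hg) (fun j : range g => f j)
    _ ≤ prod f := prod_subtype_le_prod hf _

theorem prod_beth_toOrd_le (o : Ordinal.{u}) :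
    prod (fun i : o.ToType => ℶ_ (Ordinal.ToType.toOrd i).1) ≤ 2 ^ ℶ_ o :=
  calc prod (fun i : o.ToType => ℶ_ (Ordinal.ToType.toOrd i).1)
      ≤ prod (fun _ : o.ToType => 2 ^ ℶ_ o) := prod_le_prod _ _ fun i =>
        (beth_le_beth.2 (Ordinal.ToType.toOrd i).2.le).trans (cantor _).le
    _ = 2 ^ (ℶ_ o * o.card) := by rw [prod_const', mk_toType, power_mul]
    _ ≤ 2 ^ ℶ_ o := power_le_power_left two_ne_zero <|
        (mul_le_max_of_aleph0_le_left (aleph0_le_beth o)).trans (max_le le_rfl o.card_le_beth)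

theorem beth_le_sum_beth_toOrd {o : Ordinal.{u}} (ho : IsSuccLimit o) :
    ℶ_ o ≤ sum (fun i : o.ToType => ℶ_ (Ordinal.ToType.toOrd i).1) := by
  rw [beth_limit ho]
  refine ciSup_le' fun a => ?_
  simpa using le_sum (fun i : o.ToType => ℶ_ (Ordinal.ToType.toOrd i).1) (Ordinal.ToType.mk a)

theorem two_power_beth_le_prod_beth_toOrd {o : Ordinal.{u}} (ho : IsSuccLimit o) :
    2 ^ ℶ_ o ≤ prod (fun i : o.ToType => ℶ_ (Ordinal.ToType.toOrd i).1) := by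
  set F := fun i : o.ToType => ℶ_ (Ordinal.ToType.toOrd i).1
  let succIio : Iio o → Iio o := fun a => ⟨succ a.1, ho.succ_lt a.2⟩
  have hsucc : Function.Injective succIio := fun a b h =>
    Subtype.ext (succ_injective (congrArg Subtype.val h))
  let shift := Ordinal.ToType.mk ∘ succIio ∘ Ordinal.ToType.mk.symm
  have hshift : Function.Injective shift :=
    Ordinal.ToType.mk.injective.comp (hsucc.comp Ordinal.ToType.mk.symm.injective)
  calc 2 ^ ℶ_ o ≤ 2 ^ sum F := power_le_power_left two_ne_zero (beth_le_sum_beth_toOrd ho)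
    _ = prod (fun i => 2 ^ F i) := power_sum _ _
    _ = prod (F ∘ shift) := congrArg prod <| funext fun i => by
        simp only [Function.comp_apply, F, shift, succIio, OrderIso.symm_apply_apply, beth_succ]
    _ ≤ prod F := prod_comp_le_prod_of_injective (fun _ => (beth_pos _).ne') hshift

-- Indexed by `o.ToType` rather than `Iio o`, which lives in the next universe.
theorem prod_beth_toOrd_of_isSuccLimit {o : Ordinal.{u}} (ho : IsSuccLimit o) :
    prod (fun i : o.ToType => ℶ_ (Ordinal.ToType.toOrd i).1) = ℶ_ (succ o) := by
  rw [beth_succ]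
  exact (prod_beth_toOrd_le o).antisymm (two_power_beth_le_prod_beth_toOrd ho)

end Cardinal

theorem stmt3 (κ : Cardinal.{u}) (hκ : ℵ₀ ≤ κ) :
    Cardinal.prod
      (fun i : κ.ord.ToType => Cardinal.beth ((Ordinal.ToType.mk (o := κ.ord)).symm i).1)
      = Cardinal.beth (κ.ord + 1) := by
  rw [← succ_eq_add_one]
  exact prod_beth_toOrd_of_isSuccLimit (isSuccLimit_ord hκ)
end

section
/- Let G be an ℵ₀-existentially closed group. Then every subgroup of G of cardinality less than ℵ₀ (i.e., every finite subgroup) has nontrivial centralizer in G; more generally, if G is κ-existentially closed then every subgroup of cardinality < κ has nontrivial centralizer in G. -/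
/-!
A nontrivial element centralizing `S ⊆ G` is exactly a solution of the system `⁅g, x⁆ = 1`
(`g ∈ S`), `x ≠ 1`, which has fewer than `κ` members when `#S < κ` and `κ` is infinite. In `G × ℤ`
it is solved by `x = (1, n)` for any `n ≠ 0`, so existential closedness yields a solution in `G`.
-/

open Cardinal

/-- `s` solves the system of equations `E` and inequations `I` (words in the free
product of `G` with a free group on the variables `V`) in the supergroup given by
the embedding `f : G →* H`. -/
def IsSolution {G H : Type u} [Group G] [Group H] {V : Type u} (f : G →* H)
    (E I : Set (Monoid.Coprod G (FreeGroup V))) (s : V → H) : Prop :=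
  (∀ w ∈ E, Monoid.Coprod.lift f (FreeGroup.lift s) w = 1) ∧
  (∀ w ∈ I, Monoid.Coprod.lift f (FreeGroup.lift s) w ≠ 1)

/-- `G` is `κ`-existentially closed: `|G| ≥ κ` and every system of fewer than `κ`
equations and inequations with coefficients in `G` which is solvable in some
supergroup of `G` is already solvable in `G`. -/
def ExistentiallyClosed (κ : Cardinal.{u}) (G : Type u) [Group G] : Prop :=
  κ ≤ #G ∧
  ∀ (V : Type u) (E I : Set (Monoid.Coprod G (FreeGroup V))),
    #E + #I < κ →
    (∃ (H : Type u) (_ : Group H) (f : G →* H) (s : V → H),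
      Function.Injective f ∧ IsSolution f E I s) →
    ∃ s : V → G, IsSolution (MonoidHom.id G) E I s

open scoped commutatorElement

namespace ExistentiallyClosed

variable {G : Type u} [Group G]

abbrev var : Monoid.Coprod G (FreeGroup PUnit.{u+1}) :=
  Monoid.Coprod.inr (FreeGroup.of PUnit.unit)

def commuteEquations (S : Set G) : Set (Monoid.Coprod G (FreeGroup PUnit.{u+1})) :=
  (fun g => ⁅(Monoid.Coprod.inl g : Monoid.Coprod G (FreeGroup PUnit.{u+1})), var⁆) '' S

lemma isSolution_commuteEquations_iff {H : Type u} [Group H] (f : G →* H) (S : Set G)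
    (s : PUnit.{u+1} → H) :
    IsSolution f (commuteEquations S) {var} s ↔
      (∀ g ∈ S, Commute (f g) (s PUnit.unit)) ∧ s PUnit.unit ≠ 1 := by
  simp only [IsSolution, commuteEquations, Set.forall_mem_image, Set.mem_singleton_iff,
    forall_eq, map_commutatorElement, Monoid.Coprod.lift_apply_inl,
    Monoid.Coprod.lift_apply_inr, FreeGroup.lift_apply_of, commutatorElement_eq_one_iff_commute]

lemma exists_supergroup_solution (S : Set G) :
    ∃ (H : Type u) (_ : Group H) (f : G →* H) (s : PUnit.{u+1} → H),
      Function.Injective f ∧ IsSolution f (commuteEquations S) {var} s := by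
  obtain ⟨k, hk⟩ := exists_ne (1 : ULift.{u} (Multiplicative ℤ))
  refine ⟨G × ULift.{u} (Multiplicative ℤ), inferInstance, MonoidHom.inl _ _, fun _ => (1, k),
    Prod.mk_left_injective 1, ?_⟩
  rw [isSolution_commuteEquations_iff]
  exact ⟨fun g _ => Prod.ext (Commute.one_right g) (Commute.one_left k),
    fun h => hk (congrArg Prod.snd h)⟩

theorem exists_ne_one_forall_commute {κ : Cardinal.{u}} (hκ : ℵ₀ ≤ κ)
    (hG : ExistentiallyClosed κ G) (S : Set G) (hS : #S < κ) :
    ∃ x : G, x ≠ 1 ∧ ∀ g ∈ S, Commute g x := by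
  have hcard : #(commuteEquations S) + #({var} : Set (Monoid.Coprod G _)) < κ :=
    add_lt_of_lt hκ (mk_image_le.trans_lt hS)
      (by simpa using one_lt_aleph0.trans_le hκ)
  obtain ⟨s, hs⟩ := hG.2 _ _ _ hcard (exists_supergroup_solution S)
  obtain ⟨hcomm, hne⟩ := (isSolution_commuteEquations_iff _ S s).1 hs
  exact ⟨s PUnit.unit, hne, hcomm⟩

end ExistentiallyClosed

/-- In a `κ`-existentially closed group every subgroup of cardinality `< κ`
has nontrivial centralizer. -/
theorem stmt8 (κ : Cardinal.{u}) (hκ : ℵ₀ ≤ κ) (G : Type u) [Group G]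
    (hG : ExistentiallyClosed κ G) (H : Subgroup G) (hH : #H < κ) :
    ∃ g : G, g ≠ 1 ∧ g ∈ Subgroup.centralizer (H : Set G) := by
  obtain ⟨x, hx, hcomm⟩ := hG.exists_ne_one_forall_commute hκ (H : Set G) hH
  exact ⟨x, hx, Subgroup.mem_centralizer_iff.2 fun h hh => (hcomm h hh).eq⟩
end

section
/- Let G be a group with the property that for any two isomorphic subgroups A, B of cardinality < κ, every isomorphism A → B is induced by conjugation by an element of G, and such that every group of cardinality < κ embeds into G. Then for all groups H ≤ K with |K| < κ, every embedding φ: H → G extends to an embedding of K into G. -/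
/-!
Embed `K` into `G` by any `f`. The two embeddings `f|_H` and `φ` of `H` differ by an
isomorphism between small subgroups of `G`, hence by conjugation with some `t`, and then
`conj t ∘ f` extends `φ`.
-/

open Cardinal

theorem exists_conj_eq_of_injective {κ : Cardinal.{u}} {G : Type u} [Group G]
    (hconj : ∀ A B : Subgroup G, #A < κ → #B < κ → ∀ ψ : ↥A ≃* ↥B,
      ∃ t : G, ∀ a : ↥A, (ψ a : G) = t * a * t⁻¹)
    {H : Type u} [Group H] (hH : #H < κ) {f φ : H →* G}
    (hf : Function.Injective f) (hφ : Function.Injective φ) :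
    ∃ t : G, ∀ h : H, t * f h * t⁻¹ = φ h := by
  have mk_range_lt (g : H →* G) : #g.range < κ := (mk_range_le (f := g)).trans_lt hH
  obtain ⟨t, ht⟩ := hconj _ _ (mk_range_lt f) (mk_range_lt φ)
    ((MonoidHom.ofInjective hf).symm.trans (MonoidHom.ofInjective hφ))
  refine ⟨t, fun h => ?_⟩
  have := ht (MonoidHom.ofInjective hf h)
  rw [MulEquiv.trans_apply, MulEquiv.symm_apply_apply] at this
  exact this.symm

theorem stmt10_general (κ : Cardinal.{u}) (G : Type u) [Group G]
    (hembed : ∀ (K : Type u) [Group K], #K < κ → ∃ f : K →* G, Function.Injective f)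
    (hconj : ∀ A B : Subgroup G, #A < κ → #B < κ → ∀ ψ : ↥A ≃* ↥B,
      ∃ t : G, ∀ a : ↥A, (ψ a : G) = t * a * t⁻¹)
    (K : Type u) [Group K] (H : Subgroup K) (hK : #K < κ)
    (φ : ↥H →* G) (hφ : Function.Injective φ) :
    ∃ ψ : K →* G, Function.Injective ψ ∧ ∀ h : ↥H, ψ (h : K) = φ h := by
  obtain ⟨f, hf⟩ := hembed K hK
  obtain ⟨t, ht⟩ := exists_conj_eq_of_injective (f := f.comp H.subtype) hconj
    ((mk_subtype_le _).trans_lt hK) (hf.comp Subtype.coe_injective) hφ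
  exact ⟨(MulAut.conj t).toMonoidHom.comp f, (MulAut.conj t).injective.comp hf, ht⟩

/-- If every group of cardinality `< κ` embeds in `G` and isomorphisms between small
subgroups of `G` are induced by conjugation, then embeddings of `H ≤ K` into `G`
extend to embeddings of `K` into `G`, for `|K| < κ`. -/
theorem stmt10 (κ : Cardinal.{u}) (hκ : ℵ₀ ≤ κ) (G : Type u) [Group G]
    (hembed : ∀ (K : Type u) [Group K], #K < κ → ∃ f : K →* G, Function.Injective f)
    (hconj : ∀ A B : Subgroup G, #A < κ → #B < κ → ∀ ψ : ↥A ≃* ↥B,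
      ∃ t : G, ∀ a : ↥A, (ψ a : G) = t * a * t⁻¹)
    (K : Type u) [Group K] (H : Subgroup K) (hK : #K < κ)
    (φ : ↥H →* G) (hφ : Function.Injective φ) :
    ∃ ψ : K →* G, Function.Injective ψ ∧ ∀ h : ↥H, ψ (h : K) = φ h :=
  stmt10_general κ G hembed hconj K H hK φ hφ
end

section
/- Let κ be uncountable and regular, and let G be a κ-existentially closed group of cardinality κ whose automorphisms are all κ-inner, where G is the continuous increasing union of subgroups (G_α)_{α<κ} of cardinality < κ such that each G_{α+1} = Sym(G_α) with G_α embedded by its right regular representation (and |G_0| ≥ 7 finite). Then the group Aut_A(G) of A-level-preserving automorphisms, for A the set of all successor ordinals below κ, contains a subgroup isomorphic to ∏_{α<κ successor} C_{G_α}(G_{α-1}), and this product has cardinality 2^κ when κ is inaccessible. -/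
open Cardinal Set Equiv

attribute [local instance 0] Classical.propDecidable
set_option linter.unusedSectionVars false

universe u

namespace Stmt18X

/-- mulLeft noncentrality witness -/
lemma mulLeft_noncentral {Γ : Type*} [Group Γ] (b : Γ) (hb : b ≠ 1)
    (h3 : ∃ z : Γ, z ≠ 1 ∧ z ≠ b) :
    ∃ σ : Equiv.Perm Γ, (Equiv.mulLeft b) * σ ≠ σ * (Equiv.mulLeft b) := by
  classical
  obtain ⟨z, hz1, hzb⟩ := h3
  refine ⟨Equiv.swap 1 z, fun h => ?_⟩
  have h1 : ((Equiv.mulLeft b * Equiv.swap 1 z) : Equiv.Perm Γ) 1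
      = ((Equiv.swap 1 z * Equiv.mulLeft b) : Equiv.Perm Γ) 1 := by rw [h]
  simp only [Equiv.Perm.mul_apply] at h1
  rw [Equiv.swap_apply_left] at h1
  have hb1 : (Equiv.mulLeft b) (1 : Γ) = b := by simp
  rw [hb1] at h1
  have hbz : (Equiv.mulLeft b) z = b * z := by simp
  rw [hbz] at h1
  rw [Equiv.swap_apply_of_ne_of_ne hb (fun h' => hzb h'.symm)] at h1
  exact hz1 (by
    have := h1.symm
    have : b * z = b * 1 := by simpa using this
    exact mul_left_cancel this)

/-- in a group with a finite subgroup of card ≥ 7, we can avoid 1 and b -/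
lemma exists_ne_ne {Γ : Type*} [Group Γ] (H : Subgroup Γ) [Finite H] (h7 : 7 ≤ Nat.card H)
    (b : Γ) : ∃ z : Γ, z ∈ H ∧ z ≠ 1 ∧ z ≠ b := by
  classical
  by_contra hcon
  push_neg at hcon
  have hsub : (H : Set Γ) ⊆ ({1, b} : Set Γ) := by
    intro y hy
    rcases eq_or_ne y 1 with h | h
    · exact Or.inl h
    · exact Or.inr (hcon y hy h)
  have hfin : ({1, b} : Set Γ).Finite := Set.toFinite _
  have h1 : Nat.card H ≤ Nat.card ({1, b} : Set Γ) := by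
    have : Nat.card (H : Set Γ) ≤ Nat.card ({1, b} : Set Γ) :=
      Nat.card_mono hfin hsub
    simpa using this
  have h2 : Nat.card ({1, b} : Set Γ) ≤ 2 := by
    rw [Nat.card_coe_set_eq]
    calc ({1, b} : Set Γ).ncard ≤ ({b} : Set Γ).ncard + 1 := Set.ncard_insert_le _ _
      _ ≤ 2 := by simp [Set.ncard_singleton]
  omega

/-- strict cardinal growth of Perm -/
lemma mk_lt_mk_perm (Y : Type u) (h3 : 3 ≤ Nat.card Y ∨ Infinite Y) : #Y < #(Equiv.Perm Y) := by
  rcases h3 with h3 | hinf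
  · have hfin : Finite Y := by
      rcases finite_or_infinite Y with h | h
      · exact h
      · simp [Nat.card_eq_zero_of_infinite] at h3
    have : Fintype Y := Fintype.ofFinite Y
    classical
    rw [Cardinal.mk_fintype, Cardinal.mk_fintype]
    rw [Fintype.card_perm]
    have := Nat.lt_factorial_self (n := Fintype.card Y) (by rwa [Nat.card_eq_fintype_card] at h3)
    exact_mod_cast this
  · rw [Cardinal.mk_perm_eq_self_power, Cardinal.power_self_eq (Cardinal.infinite_iff.1 hinf)]
    exact Cardinal.cantor _


section Wreath
variable {W : Type*} [Group W]

/-- right-coset-compatible decomposition -/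
noncomputable def cosetEquiv (S : Subgroup W) : W ≃ (W ⧸ S) × S where
  toFun x := ((x : W ⧸ S), ⟨(Quotient.out (QuotientGroup.mk x : W ⧸ S))⁻¹ * x, by
    rw [← QuotientGroup.eq]
    exact QuotientGroup.out_eq' _⟩)
  invFun p := Quotient.out p.1 * (p.2 : W)
  left_inv x := by
    simp only []
    rw [← mul_assoc, mul_inv_cancel, one_mul]
  right_inv p := by
    obtain ⟨q, s⟩ := p
    have hq : ((Quotient.out q * (s : W) : W) : W ⧸ S) = q := by
      rw [QuotientGroup.mk_mul_of_mem _ s.2, QuotientGroup.out_eq']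
    refine Prod.ext hq ?_
    refine Subtype.ext ?_
    simp only [hq]
    rw [← mul_assoc, inv_mul_cancel, one_mul]

lemma cosetEquiv_fst (S : Subgroup W) (x : W) : ((cosetEquiv S x).1) = (x : W ⧸ S) := rfl

lemma cosetEquiv_snd (S : Subgroup W) (x : W) :
    ((cosetEquiv S x).2 : W) = (Quotient.out ((x : W ⧸ S)))⁻¹ * x := rfl

lemma cosetEquiv_symm (S : Subgroup W) (q : W ⧸ S) (s : S) :
    (cosetEquiv S).symm (q, s) = Quotient.out q * (s : W) := rfl

/-- the wreath-style embedding of permutations of the coset space -/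
lemma wreath (S : Subgroup W) :
    ∃ j : Equiv.Perm (W ⧸ S) →* Equiv.Perm W, Function.Injective j ∧
      (∀ σ (x s : W), s ∈ S → j σ (x * s) = j σ x * s) := by
  classical
  set E := cosetEquiv S with hE
  have happ : ∀ (σ : Equiv.Perm (W ⧸ S)) (x : W),
      (E.trans ((Equiv.prodCongr σ (Equiv.refl S)).trans E.symm)) x
        = Quotient.out (σ (x : W ⧸ S)) * ((Quotient.out ((x : W ⧸ S)))⁻¹ * x) := by
    intro σ x
    simp only [Equiv.trans_apply, Equiv.prodCongr_apply, Prod.map]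
    rw [cosetEquiv_symm]
    rfl
  refine ⟨{ toFun := fun σ => E.trans ((Equiv.prodCongr σ (Equiv.refl S)).trans E.symm)
            map_one' := ?_
            map_mul' := ?_ }, ?_, ?_⟩
  · ext x
    rw [happ]
    simp only [Equiv.Perm.one_apply]
    rw [← mul_assoc, mul_inv_cancel, one_mul]
  · intro σ τ
    ext x
    simp only [Equiv.Perm.mul_apply]
    rw [happ, happ, happ]
    have h1 : ((Quotient.out (τ (x : W ⧸ S)) * ((Quotient.out ((x : W ⧸ S)))⁻¹ * x) : W) : W ⧸ S)
        = τ (x : W ⧸ S) := by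
      rw [QuotientGroup.mk_mul_of_mem, QuotientGroup.out_eq']
      rw [← QuotientGroup.eq]
      exact QuotientGroup.out_eq' _
    rw [h1, Equiv.Perm.mul_apply]
    group
  · rw [injective_iff_map_eq_one]
    intro σ hσ
    ext q
    have := congrArg (fun (p : Equiv.Perm W) => p (Quotient.out q)) hσ
    simp only [Equiv.Perm.one_apply, MonoidHom.coe_mk, OneHom.coe_mk] at this
    rw [happ] at this
    rw [QuotientGroup.out_eq'] at this
    rw [inv_mul_cancel, mul_one] at this
    have h5 := congrArg (QuotientGroup.mk (s := S)) this
    rw [QuotientGroup.out_eq', QuotientGroup.out_eq'] at h5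
    simpa using h5
  · intro σ x s hs
    simp only [MonoidHom.coe_mk, OneHom.coe_mk]
    rw [happ, happ]
    have h2 : ((x * s : W) : W ⧸ S) = (x : W ⧸ S) := QuotientGroup.mk_mul_of_mem _ hs
    rw [h2, mul_assoc, mul_assoc]

end Wreath

section OfSubtype
variable {Γ : Type*} [Group Γ]

lemma ofSubtype_injective {p : Γ → Prop} [DecidablePred p] :
    Function.Injective (Equiv.Perm.ofSubtype : Equiv.Perm (Subtype p) →* Equiv.Perm Γ) := by
  rw [injective_iff_map_eq_one]
  intro η hη
  ext y
  have := congrArg (fun (π : Equiv.Perm Γ) => π (y : Γ)) hη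
  simp only [Equiv.Perm.one_apply] at this
  rw [Equiv.Perm.ofSubtype_apply_of_mem η y.2] at this
  exact_mod_cast this

lemma ofSubtype_commute_mulLeft (Φ : Subgroup Γ) [DecidablePred (· ∈ Φ)]
    (η : Equiv.Perm ↥Φ) (b : ↥Φ)
    (hcomm : Commute η (Equiv.mulLeft b)) :
    Commute (Equiv.Perm.ofSubtype η) (Equiv.mulLeft (b : Γ)) := by
  classical
  apply Equiv.ext
  intro x
  simp only [Equiv.Perm.mul_apply, Equiv.coe_mulLeft]
  by_cases hx : x ∈ Φ
  · have hbx : (b : Γ) * x ∈ Φ := mul_mem b.2 hx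
    rw [Equiv.Perm.ofSubtype_apply_of_mem η hbx, Equiv.Perm.ofSubtype_apply_of_mem η hx]
    have := congrArg (fun (π : Equiv.Perm ↥Φ) => ((π ⟨x, hx⟩ : ↥Φ) : Γ)) hcomm
    simp only [Equiv.Perm.mul_apply, Equiv.coe_mulLeft] at this
    have h3 : (b * (⟨x, hx⟩ : ↥Φ) : ↥Φ) = ⟨(b : Γ) * x, hbx⟩ := by
      apply Subtype.ext; rfl
    rw [h3] at this
    rw [this]
    push_cast
    ring_nf
  · have hbx : ¬ ((b : Γ) * x ∈ Φ) := by
      intro h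
      exact hx (by simpa using mul_mem (inv_mem b.2) h)
    rw [Equiv.Perm.ofSubtype_apply_of_not_mem η hbx, Equiv.Perm.ofSubtype_apply_of_not_mem η hx]

lemma ofSubtype_commute_of_fixes (Φ : Subgroup Γ) [DecidablePred (· ∈ Φ)]
    (η : Equiv.Perm ↥Φ) (π : Equiv.Perm Γ) (hπ : ∀ x : Γ, x ∈ Φ → π x = x) :
    Commute (Equiv.Perm.ofSubtype η) π := by
  apply Equiv.Perm.Disjoint.commute
  intro x
  by_cases hx : x ∈ Φ
  · exact Or.inr (hπ x hx)
  · exact Or.inl (Equiv.Perm.ofSubtype_apply_of_not_mem η hx)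

end OfSubtype


structure Ctx (G : Type u) [Group G] : Type (u+1) where
  κ : Cardinal.{u}
  F : Ordinal.{u} → Subgroup G
  hκ₁ : ℵ₀ < κ
  hmono : ∀ α β₂ : Ordinal.{u}, α ≤ β₂ → β₂ < κ.ord → F α ≤ F β₂
  hlim : ∀ γ < κ.ord, Order.IsSuccLimit γ → ∀ g : G, g ∈ F γ ↔ ∃ α < γ, g ∈ F α
  hunion : ∀ g : G, ∃ α < κ.ord, g ∈ F α
  h0fin : Finite ↥(F 0)
  h0 : 7 ≤ Nat.card ↥(F 0)
  e : ∀ β, β < κ.ord → (↥(F (β+1)) ≃* Equiv.Perm ↥(F β))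
  espec : ∀ β (h : β < κ.ord) (g : G) (hg : g ∈ F β) (hg' : g ∈ F (β+1)) (x : ↥(F β)),
    e β h ⟨g, hg'⟩ x = x * (⟨g, hg⟩ : ↥(F β))⁻¹

variable {G : Type u} [Group G] (X : Ctx G)

def CC (γ : Ordinal.{u}) : Subgroup G :=
  X.F (γ + 1) ⊓ Subgroup.centralizer ((X.F γ : Subgroup G) : Set G)

abbrev PP : Type u :=
  (i : X.κ.ord.ToType) →
    ↥(X.F (((Ordinal.ToType.mk (o := X.κ.ord)).symm i).1 + 1) ⊓
      Subgroup.centralizer ((X.F (((Ordinal.ToType.mk (o := X.κ.ord)).symm i).1) : Subgroup G) : Set G))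

noncomputable def coordG (c : PP X) (γ : Ordinal.{u}) (hγ : γ < X.κ.ord) : G :=
  ↑(c ((Ordinal.ToType.mk (o := X.κ.ord)) ⟨γ, hγ⟩))

lemma coordG_mem (c : PP X) (γ : Ordinal.{u}) (hγ : γ < X.κ.ord) :
    coordG X c γ hγ ∈ CC X γ := by
  have h : ((Ordinal.ToType.mk (o := X.κ.ord)).symm ((Ordinal.ToType.mk (o := X.κ.ord)) ⟨γ, hγ⟩)) = ⟨γ, hγ⟩ :=
    OrderIso.symm_apply_apply _ _
  have hord : (((Ordinal.ToType.mk (o := X.κ.ord)).symm ((Ordinal.ToType.mk (o := X.κ.ord)) ⟨γ, hγ⟩)) : Ordinal.{u}) = γ := by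
    rw [h]
  obtain ⟨v, hv⟩ : ∃ v : G, v = ↑(c ((Ordinal.ToType.mk (o := X.κ.ord)) ⟨γ, hγ⟩)) := ⟨_, rfl⟩
  have h2 : v ∈ X.F ((((Ordinal.ToType.mk (o := X.κ.ord)).symm ((Ordinal.ToType.mk (o := X.κ.ord)) ⟨γ, hγ⟩)) : Ordinal.{u}) + 1) ⊓
      Subgroup.centralizer ((X.F (((Ordinal.ToType.mk (o := X.κ.ord)).symm ((Ordinal.ToType.mk (o := X.κ.ord)) ⟨γ, hγ⟩)) : Ordinal.{u}) : Subgroup G) : Set G) := by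
    rw [hv]
    exact (c ((Ordinal.ToType.mk (o := X.κ.ord)) ⟨γ, hγ⟩)).2
  rw [hord] at h2
  show coordG X c γ hγ ∈ CC X γ
  unfold coordG CC
  rw [← hv]
  exact h2

lemma coordG_mul (c c' : PP X) (γ : Ordinal.{u}) (hγ : γ < X.κ.ord) :
    coordG X (c * c') γ hγ = coordG X c γ hγ * coordG X c' γ hγ := rfl

lemma coordG_one (γ : Ordinal.{u}) (hγ : γ < X.κ.ord) : coordG X 1 γ hγ = 1 := rfl

lemma exists_coordG_ne_one (c : PP X) (hc : c ≠ 1) :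
    ∃ γ hγ, coordG X c γ hγ ≠ 1 := by
  have : ∃ i, c i ≠ 1 := by
    by_contra hcon
    push_neg at hcon
    exact hc (funext fun i => hcon i)
  obtain ⟨i, hi⟩ := this
  refine ⟨((Ordinal.ToType.mk (o := X.κ.ord)).symm i).1, ((Ordinal.ToType.mk (o := X.κ.ord)).symm i).2, ?_⟩
  unfold coordG
  have h2 : (Ordinal.ToType.mk (o := X.κ.ord))
      ⟨((Ordinal.ToType.mk (o := X.κ.ord)).symm i).1, ((Ordinal.ToType.mk (o := X.κ.ord)).symm i).2⟩ = i := by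
    have := OrderIso.apply_symm_apply (Ordinal.ToType.mk (o := X.κ.ord)) i
    convert this
  rw [h2]
  intro h
  apply hi
  exact Subtype.ext (by exact_mod_cast h)

def PlantCond (δ γ : Ordinal.{u}) (tδ : PP X → G) : Prop :=
  ∃ χ : ↥(CC X γ) →* G, Function.Injective χ ∧ (∀ u, χ u ∈ X.F δ) ∧ ∀ u c, Commute (χ u) (tδ c)

noncomputable def plantEl (δ : Ordinal.{u}) (tδ : PP X → G) (c : PP X) : G :=
  if hs : (δ < X.κ.ord) ∧ ∃ γ, γ < X.κ.ord ∧ δ = Ordinal.omega0 + γ + 3 then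
    if hχ : PlantCond X δ hs.2.choose tδ then
      ((X.e δ hs.1).symm (Equiv.mulLeft
        ⟨hχ.choose ⟨coordG X c hs.2.choose hs.2.choose_spec.1,
            coordG_mem X c hs.2.choose hs.2.choose_spec.1⟩,
          hχ.choose_spec.2.1 _⟩) : G)
    else 1
  else 1

def Econd (β : Ordinal.{u}) (u : G) : Prop :=
  (β < X.κ.ord) ∧ ∀ x : G, x ∈ X.F β → u * x * u⁻¹ ∈ X.F β ∧ u⁻¹ * x * u ∈ X.F β

noncomputable def conjPerm (β : Ordinal.{u}) (u : G)
    (h : ∀ x : G, x ∈ X.F β → u * x * u⁻¹ ∈ X.F β ∧ u⁻¹ * x * u ∈ X.F β) :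
    Equiv.Perm ↥(X.F β) where
  toFun x := ⟨u * x * u⁻¹, (h x x.2).1⟩
  invFun x := ⟨u⁻¹ * x * u, (h x x.2).2⟩
  left_inv x := by
    apply Subtype.ext
    show u⁻¹ * (u * ↑x * u⁻¹) * u = ↑x
    group
  right_inv x := by
    apply Subtype.ext
    show u * (u⁻¹ * ↑x * u) * u⁻¹ = ↑x
    group

noncomputable def Epart (β : Ordinal.{u}) (u : G) : G :=
  if h : Econd X β u then ((X.e β h.1).symm (conjPerm X β u h.2) : G) else 1

noncomputable def rawGlue (lam : Ordinal.{u}) (ih : ∀ α, α < lam → PP X → G) (c : PP X)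
    (x : ↥(X.F lam)) : ↥(X.F lam) :=
  if hx : ∃ α, ∃ hα : α < lam, (x : G) ∈ X.F α ∧
      ih α hα c * x * (ih α hα c)⁻¹ ∈ X.F lam then
    ⟨ih hx.choose hx.choose_spec.choose c * x * (ih hx.choose hx.choose_spec.choose c)⁻¹,
      hx.choose_spec.choose_spec.2⟩
  else x

noncomputable def glueEl (lam : Ordinal.{u}) (ih : ∀ α, α < lam → PP X → G) (c : PP X) : G :=
  if h : (lam < X.κ.ord) ∧ Function.Bijective (rawGlue X lam ih c) then
    ((X.e lam h.1).symm (Equiv.ofBijective _ h.2) : G)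
  else 1

noncomputable def tmap : Ordinal.{u} → PP X → G := fun β =>
  Ordinal.limitRecOn β (fun _ => (1 : G))
    (fun δ tδ c => plantEl X δ tδ c * Epart X δ (tδ c))
    (fun lam _ ih c => glueEl X lam (fun α hα => ih α hα) c)

lemma tmap_zero : tmap X 0 = fun _ => 1 := Ordinal.limitRecOn_zero _ _ _

lemma tmap_succ (δ : Ordinal.{u}) :
    tmap X (δ + 1) = fun c => plantEl X δ (tmap X δ) c * Epart X δ (tmap X δ c) := by
  unfold tmap
  rw [Ordinal.add_one_eq_succ, Ordinal.limitRecOn_succ]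

lemma tmap_limit (lam : Ordinal.{u}) (h : Order.IsSuccLimit lam) :
    tmap X lam = fun c => glueEl X lam (fun α _ => tmap X α) c := by
  unfold tmap
  rw [Ordinal.limitRecOn_limit _ _ _ _ h]


lemma succ_lt {β : Ordinal.{u}} (h : β < X.κ.ord) : β + 1 < X.κ.ord := by
  rw [Ordinal.add_one_eq_succ]
  exact (Cardinal.isSuccLimit_ord (le_of_lt X.hκ₁)).succ_lt h

lemma Fle {α β : Ordinal.{u}} (hαβ : α ≤ β) (hβ : β < X.κ.ord) : X.F α ≤ X.F β :=
  X.hmono α β hαβ hβ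

lemma mem_up {β : Ordinal.{u}} (h : β < X.κ.ord) {y : G} (hy : y ∈ X.F β) :
    y ∈ X.F (β + 1) :=
  Fle X (le_of_lt (lt_add_one β)) (succ_lt X h) hy

/-- e of a lifted member is right multiplication -/
lemma e_lift {β : Ordinal.{u}} (h : β < X.κ.ord) (z : ↥(X.F β)) (hz' : (z : G) ∈ X.F (β+1)) :
    X.e β h ⟨(z : G), hz'⟩ = Equiv.mulRight z⁻¹ := by
  ext x
  rw [X.espec β h (z : G) z.2 hz' x]
  simp

/-- conjugation by e.symm of a multiplicative permutation -/
lemma econj_conj {β : Ordinal.{u}} (h : β < X.κ.ord) (m : Equiv.Perm ↥(X.F β))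
    (hm : ∀ a b : ↥(X.F β), m (a * b) = m a * m b) (y : G) (hy : y ∈ X.F β) :
    ((X.e β h).symm m : G) * y * (((X.e β h).symm m : G))⁻¹ = ↑(m ⟨y, hy⟩) := by
  have hm1 : m 1 = 1 := by
    have h11 := hm 1 1
    rw [mul_one] at h11
    have h12 : m 1 * 1 = m 1 * m 1 := by rw [mul_one]; exact h11
    exact (mul_left_cancel h12).symm
  have hminv : ∀ a : ↥(X.F β), m a⁻¹ = (m a)⁻¹ := by
    intro a
    have := hm a⁻¹ a
    rw [inv_mul_cancel, hm1] at this
    exact eq_inv_of_mul_eq_one_left this.symm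
  set p : ↥(X.F (β+1)) := (X.e β h).symm m with hp
  have hyup : y ∈ X.F (β+1) := mem_up X h hy
  have hmyup : ↑(m ⟨y, hy⟩) ∈ X.F (β+1) := mem_up X h (m ⟨y, hy⟩).2
  have key : p * ⟨y, hyup⟩ * p⁻¹ = ⟨↑(m ⟨y, hy⟩), hmyup⟩ := by
    apply (X.e β h).injective
    rw [map_mul, map_mul, map_inv]
    have h1 : X.e β h ⟨y, hyup⟩ = Equiv.mulRight (⟨y, hy⟩ : ↥(X.F β))⁻¹ := e_lift X h ⟨y, hy⟩ hyup
    have h2 : X.e β h ⟨↑(m ⟨y, hy⟩), hmyup⟩ = Equiv.mulRight (m ⟨y, hy⟩)⁻¹ :=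
      e_lift X h (m ⟨y, hy⟩) hmyup
    rw [h1, h2, hp, MulEquiv.apply_symm_apply]
    ext x
    simp only [Equiv.Perm.mul_apply, Equiv.coe_mulRight]
    have hx : m (m⁻¹ x * (⟨y, hy⟩ : ↥(X.F β))⁻¹) = x * (m ⟨y, hy⟩)⁻¹ := by
      rw [hm, hminv, show m (m⁻¹ x) = x from Equiv.apply_symm_apply m x]
    exact_mod_cast congrArg (fun w : ↥(X.F β) => (w : G)) hx
  have := congrArg (fun (w : ↥(X.F (β+1))) => (w : G)) key
  simpa using this

/-- e.symm of mulLeft centralizes F β -/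
lemma mulLeft_conj {β : Ordinal.{u}} (h : β < X.κ.ord) (b : ↥(X.F β)) (y : G) (hy : y ∈ X.F β) :
    ((X.e β h).symm (Equiv.mulLeft b) : G) * y * (((X.e β h).symm (Equiv.mulLeft b) : G))⁻¹ = y := by
  set p : ↥(X.F (β+1)) := (X.e β h).symm (Equiv.mulLeft b) with hp
  have hyup : y ∈ X.F (β+1) := mem_up X h hy
  have key : p * ⟨y, hyup⟩ * p⁻¹ = ⟨y, hyup⟩ := by
    apply (X.e β h).injective
    rw [map_mul, map_mul, map_inv]
    have h1 : X.e β h ⟨y, hyup⟩ = Equiv.mulRight (⟨y, hy⟩ : ↥(X.F β))⁻¹ := e_lift X h ⟨y, hy⟩ hyup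
    rw [h1, hp, MulEquiv.apply_symm_apply]
    ext x
    simp [mul_assoc]
  have := congrArg (fun (w : ↥(X.F (β+1))) => (w : G)) key
  simpa using this

lemma mulLeft_commute {β : Ordinal.{u}} (h : β < X.κ.ord) (b : ↥(X.F β)) (y : G)
    (hy : y ∈ X.F β) : Commute ((X.e β h).symm (Equiv.mulLeft b) : G) y := by
  have := mulLeft_conj X h b y hy
  have h2 := congrArg (fun w => w * ((X.e β h).symm (Equiv.mulLeft b) : G)) this
  simpa [mul_assoc, commute_iff_eq] using h2

/-- membership in CC of the mulLeft elements -/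
lemma mulLeft_mem_CC {β : Ordinal.{u}} (h : β < X.κ.ord) (b : ↥(X.F β)) :
    ((X.e β h).symm (Equiv.mulLeft b) : G) ∈ CC X β := by
  refine Subgroup.mem_inf.mpr ⟨((X.e β h).symm (Equiv.mulLeft b)).2, ?_⟩
  rw [Subgroup.mem_centralizer_iff]
  intro y hy
  exact (mulLeft_commute X h b y hy).symm

lemma conjPerm_mul {β : Ordinal.{u}} (u : G)
    (hc : ∀ x : G, x ∈ X.F β → u * x * u⁻¹ ∈ X.F β ∧ u⁻¹ * x * u ∈ X.F β)
    (a b : ↥(X.F β)) :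
    conjPerm X β u hc (a * b) = conjPerm X β u hc a * conjPerm X β u hc b := by
  apply Subtype.ext
  show u * (↑a * ↑b) * u⁻¹ = (u * ↑a * u⁻¹) * (u * ↑b * u⁻¹)
  group

lemma Epart_mem {β : Ordinal.{u}} (u : G) : Epart X β u ∈ X.F (β + 1) := by
  unfold Epart
  split
  · exact ((X.e β _).symm _).2
  · exact Subgroup.one_mem _

lemma plantEl_mem {δ : Ordinal.{u}} (tδ : PP X → G) (c : PP X) :
    plantEl X δ tδ c ∈ X.F (δ + 1) := by
  unfold plantEl
  split
  · split
    · exact ((X.e δ _).symm _).2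
    · exact Subgroup.one_mem _
  · exact Subgroup.one_mem _

lemma Epart_conj {β : Ordinal.{u}} (u : G) (h : Econd X β u) (y : G) (hy : y ∈ X.F β) :
    Epart X β u * y * (Epart X β u)⁻¹ = u * y * u⁻¹ := by
  unfold Epart
  rw [dif_pos h]
  rw [econj_conj X h.1 (conjPerm X β u h.2) (conjPerm_mul X u h.2) y hy]
  rfl

lemma Epart_one {β : Ordinal.{u}} : Epart X β 1 = 1 := by
  unfold Epart
  split
  case isTrue h =>
    have : conjPerm X β 1 h.2 = 1 := by
      apply Equiv.ext
      intro x
      apply Subtype.ext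
      show (1 : G) * ↑x * (1 : G)⁻¹ = ↑x
      group
    rw [this, map_one]
    rfl
  case isFalse h => rfl



lemma commute_of_conj {a b : G} (h : a * b * a⁻¹ = b) : Commute a b := by
  have h2 : a * b = (a * b * a⁻¹) * a := by group
  rw [h] at h2
  exact h2

lemma sched_succ_form (γ : Ordinal.{u}) :
    Ordinal.omega0 + γ + 3 = Order.succ (Ordinal.omega0 + γ + 2) := by
  have h3 : (3 : Ordinal.{u}) = 2 + 1 := by norm_num
  rw [← Ordinal.add_one_eq_succ, add_assoc (Ordinal.omega0 + γ) 2 1, ← h3]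

lemma sched_unique {γ γ' : Ordinal.{u}}
    (h : Ordinal.omega0 + γ + 3 = Ordinal.omega0 + γ' + 3) : γ = γ' := by
  rw [add_assoc, add_assoc, add_left_cancel_iff] at h
  have h3 : (3 : Ordinal.{u}) = 2 + 1 := by norm_num
  have h2 : (2 : Ordinal.{u}) = 1 + 1 := by norm_num
  rw [h3, h2] at h
  rw [← add_assoc, ← add_assoc, ← add_assoc, ← add_assoc] at h
  rw [Ordinal.add_one_eq_succ, Ordinal.add_one_eq_succ, Ordinal.add_one_eq_succ] at h
  rw [Ordinal.add_one_eq_succ, Ordinal.add_one_eq_succ, Ordinal.add_one_eq_succ] at h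
  exact Order.succ_injective (Order.succ_injective (Order.succ_injective h))

lemma card_three : ((3 : Ordinal.{u}).card) = 3 := by
  have h : ((3 : ℕ) : Ordinal.{u}) = (3 : Ordinal.{u}) := by norm_num
  rw [← h, Ordinal.card_nat]
  norm_num

lemma sched_lt {γ : Ordinal.{u}} (hγ : γ < X.κ.ord) :
    Ordinal.omega0 + γ + 3 < X.κ.ord := by
  rw [Cardinal.lt_ord] at hγ ⊢
  rw [Ordinal.card_add, Ordinal.card_add, Ordinal.card_omega0, card_three]
  have h3 : (3 : Cardinal.{u}) < X.κ := lt_trans (Cardinal.nat_lt_aleph0 3) X.hκ₁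
  exact Cardinal.add_lt_of_lt (le_of_lt X.hκ₁)
    (Cardinal.add_lt_of_lt (le_of_lt X.hκ₁) X.hκ₁ hγ) h3

lemma tmap_succ_mem (δ : Ordinal.{u}) (c : PP X) : tmap X (δ + 1) c ∈ X.F (δ + 1) := by
  rw [tmap_succ]
  exact mul_mem (plantEl_mem X _ _) (Epart_mem X _)

lemma mulLeft_hom {H : Type*} [Group H] (a b : H) :
    Equiv.mulLeft (a * b) = Equiv.mulLeft a * Equiv.mulLeft b := by
  ext x
  simp [mul_assoc]

/-- master case split for plantEl -/
lemma plantEl_cases (δ : Ordinal.{u}) (tδ : PP X → G) (c : PP X) :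
    plantEl X δ tδ c = 1 ∨
    ∃ (h : δ < X.κ.ord) (b : ↥(X.F δ)), (∀ c', Commute ((b : G)) (tδ c')) ∧
      plantEl X δ tδ c = ((X.e δ h).symm (Equiv.mulLeft b) : G) := by
  unfold plantEl
  by_cases hs : (δ < X.κ.ord) ∧ ∃ γ, γ < X.κ.ord ∧ δ = Ordinal.omega0 + γ + 3
  · rw [dif_pos hs]
    by_cases hχ : PlantCond X δ hs.2.choose tδ
    · rw [dif_pos hχ]
      right
      refine ⟨hs.1, _, ?_, rfl⟩
      intro c'
      exact hχ.choose_spec.2.2 _ c'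
    · rw [dif_neg hχ]; left; rfl
  · rw [dif_neg hs]; left; rfl

/-- conjugating a planted element by e.symm of a multiplicative perm -/
lemma econj_mulLeft {β : Ordinal.{u}} (h : β < X.κ.ord) (m : Equiv.Perm ↥(X.F β))
    (hm : ∀ a b : ↥(X.F β), m (a * b) = m a * m b) (b : ↥(X.F β)) :
    ((X.e β h).symm m : G) * ((X.e β h).symm (Equiv.mulLeft b) : G) * ((X.e β h).symm m : G)⁻¹
      = ((X.e β h).symm (Equiv.mulLeft (m b)) : G) := by
  have key : ((X.e β h).symm m) * ((X.e β h).symm (Equiv.mulLeft b)) * ((X.e β h).symm m)⁻¹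
      = (X.e β h).symm (Equiv.mulLeft (m b)) := by
    apply (X.e β h).injective
    rw [map_mul, map_mul, map_inv, MulEquiv.apply_symm_apply, MulEquiv.apply_symm_apply,
      MulEquiv.apply_symm_apply]
    ext x
    simp only [Equiv.Perm.mul_apply, Equiv.coe_mulLeft]
    have hx : m (b * m⁻¹ x) = m b * x := by
      rw [hm, show m (m⁻¹ x) = x from Equiv.apply_symm_apply m x]
    exact_mod_cast congrArg (fun w : ↥(X.F β) => (w : G)) hx
  exact_mod_cast congrArg (fun w : ↥(X.F (β+1)) => (w : G)) key

/-- plant elements conjugate trivially on F δ -/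
lemma plantEl_conj (δ : Ordinal.{u}) (tδ : PP X → G) (c : PP X) (y : G) (hy : y ∈ X.F δ) :
    plantEl X δ tδ c * y * (plantEl X δ tδ c)⁻¹ = y := by
  rcases plantEl_cases X δ tδ c with h | ⟨h, b, _, heq⟩
  · rw [h]; group
  · rw [heq]; exact mulLeft_conj X h b y hy

/-- the plant commutes with the E part -/
lemma plantEl_commute_Epart (δ : Ordinal.{u}) (tδ : PP X → G) (c c' : PP X) :
    Commute (plantEl X δ tδ c) (Epart X δ (tδ c')) := by
  rcases plantEl_cases X δ tδ c with h | ⟨h, b, hcom, heq⟩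
  · rw [h]; exact Commute.one_left _
  · rw [heq]
    unfold Epart
    by_cases hE : Econd X δ (tδ c')
    · rw [dif_pos hE]
      apply Commute.symm
      apply commute_of_conj
      rw [econj_mulLeft X h (conjPerm X δ (tδ c') hE.2) (conjPerm_mul X (tδ c') hE.2) b]
      have hb : conjPerm X δ (tδ c') hE.2 b = b := by
        apply Subtype.ext
        show tδ c' * (b : G) * (tδ c')⁻¹ = (b : G)
        rw [(hcom c').symm.eq]
        group
      rw [hb]
    · rw [dif_neg hE]; exact Commute.one_right _

/-- multiplicativity of the plant in c -/
lemma plantEl_mul (δ : Ordinal.{u}) (tδ : PP X → G) (c c' : PP X) :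
    plantEl X δ tδ (c * c') = plantEl X δ tδ c * plantEl X δ tδ c' := by
  unfold plantEl
  by_cases hs : (δ < X.κ.ord) ∧ ∃ γ, γ < X.κ.ord ∧ δ = Ordinal.omega0 + γ + 3
  · rw [dif_pos hs, dif_pos hs, dif_pos hs]
    by_cases hχ : PlantCond X δ hs.2.choose tδ
    · rw [dif_pos hχ, dif_pos hχ, dif_pos hχ]
      set γ₁ := hs.2.choose
      set hγ₁ := hs.2.choose_spec.1
      set χ := hχ.choose with hχdef
      have harg : (⟨coordG X (c * c') γ₁ hγ₁, coordG_mem X (c*c') γ₁ hγ₁⟩ : ↥(CC X γ₁))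
          = ⟨coordG X c γ₁ hγ₁, coordG_mem X c γ₁ hγ₁⟩ * ⟨coordG X c' γ₁ hγ₁, coordG_mem X c' γ₁ hγ₁⟩ := by
        apply Subtype.ext
        exact coordG_mul X c c' γ₁ hγ₁
      have hb : (⟨χ ⟨coordG X (c * c') γ₁ hγ₁, coordG_mem X (c*c') γ₁ hγ₁⟩,
            hχ.choose_spec.2.1 _⟩ : ↥(X.F δ))
          = ⟨χ ⟨coordG X c γ₁ hγ₁, coordG_mem X c γ₁ hγ₁⟩, hχ.choose_spec.2.1 _⟩ *
            ⟨χ ⟨coordG X c' γ₁ hγ₁, coordG_mem X c' γ₁ hγ₁⟩, hχ.choose_spec.2.1 _⟩ := by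
        apply Subtype.ext
        show χ _ = (χ _ : G) * (χ _ : G)
        rw [harg, map_mul]
      rw [hb, mulLeft_hom, map_mul]
      push_cast
      rfl
    · rw [dif_neg hχ, dif_neg hχ, dif_neg hχ]; group
  · rw [dif_neg hs, dif_neg hs, dif_neg hs]; group

/-- multiplicativity of the E part -/
lemma Epart_mul {β : Ordinal.{u}} (u v : G) (hu : Econd X β u) (hv : Econd X β v) :
    Epart X β (u * v) = Epart X β u * Epart X β v := by
  have huv : Econd X β (u * v) := by
    refine ⟨hu.1, fun x hx => ?_⟩
    constructor
    · have h1 := (hv.2 x hx).1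
      have h2 := (hu.2 _ h1).1
      have : u * v * x * (u * v)⁻¹ = u * (v * x * v⁻¹) * u⁻¹ := by group
      rw [this]; exact h2
    · have h1 := (hu.2 x hx).2
      have h2 := (hv.2 _ h1).2
      have : (u * v)⁻¹ * x * (u * v) = v⁻¹ * (u⁻¹ * x * u) * v := by group
      rw [this]; exact h2
  unfold Epart
  rw [dif_pos hu, dif_pos hv, dif_pos huv]
  have hperm : conjPerm X β (u * v) huv.2 = conjPerm X β u hu.2 * conjPerm X β v hv.2 := by
    ext x
    show ((⟨(u*v) * x * (u*v)⁻¹, _⟩ : ↥(X.F β)) : G) = _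
    show (u*v) * (x:G) * (u*v)⁻¹ = u * (v * (x:G) * v⁻¹) * u⁻¹
    group
  rw [hperm, map_mul]
  push_cast
  rfl


/-- the commuting subgroup at level β -/
def Phi (β : Ordinal.{u}) : Subgroup ↥(X.F β) where
  carrier := {x | ∀ c : PP X, Commute (x : G) (tmap X β c)}
  one_mem' := by intro c; simp [Commute.one_left]
  mul_mem' := by
    intro a b ha hb c
    have h1 : ((a * b : ↥(X.F β)) : G) = (a : G) * (b : G) := rfl
    rw [h1]
    exact (ha c).mul_left (hb c)
  inv_mem' := by
    intro a ha c
    have h1 : ((a⁻¹ : ↥(X.F β)) : G) = (a : G)⁻¹ := rfl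
    rw [h1]
    exact (ha c).inv_left

lemma mem_Phi {β : Ordinal.{u}} (x : ↥(X.F β)) :
    x ∈ Phi X β ↔ ∀ c : PP X, Commute (x : G) (tmap X β c) := Iff.rfl

lemma glueEl_mem (lam : Ordinal.{u}) (ih : ∀ α, α < lam → PP X → G) (c : PP X) :
    glueEl X lam ih c ∈ X.F (lam + 1) := by
  unfold glueEl
  split
  · exact ((X.e lam _).symm _).2
  · exact Subgroup.one_mem _

lemma plantEl_eq_one_of_not_sched (δ : Ordinal.{u}) (tδ : PP X → G) (c : PP X)
    (h : ¬ ∃ γ, γ < X.κ.ord ∧ δ = Ordinal.omega0 + γ + 3) : plantEl X δ tδ c = 1 := by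
  unfold plantEl
  rw [dif_neg]
  intro hs
  exact h hs.2

lemma plantEl_eq_one_of_coord_one (δ : Ordinal.{u}) (tδ : PP X → G) (c : PP X)
    (h : ∀ γ (hγ : γ < X.κ.ord), δ = Ordinal.omega0 + γ + 3 → coordG X c γ hγ = 1) :
    plantEl X δ tδ c = 1 := by
  unfold plantEl
  by_cases hs : (δ < X.κ.ord) ∧ ∃ γ, γ < X.κ.ord ∧ δ = Ordinal.omega0 + γ + 3
  · rw [dif_pos hs]
    by_cases hχ : PlantCond X δ hs.2.choose tδ
    · rw [dif_pos hχ]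
      have hco : coordG X c hs.2.choose hs.2.choose_spec.1 = 1 :=
        h hs.2.choose hs.2.choose_spec.1 hs.2.choose_spec.2
      have harg : (⟨coordG X c hs.2.choose hs.2.choose_spec.1, coordG_mem X c _ _⟩ :
          ↥(CC X hs.2.choose)) = 1 := by
        apply Subtype.ext; exact hco
      have hb : (⟨hχ.choose ⟨coordG X c hs.2.choose hs.2.choose_spec.1, coordG_mem X c _ _⟩,
          hχ.choose_spec.2.1 _⟩ : ↥(X.F δ)) = 1 := by
        apply Subtype.ext
        show (hχ.choose _ : G) = 1
        rw [harg, map_one]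
      rw [hb]
      have hml : Equiv.mulLeft (1 : ↥(X.F δ)) = 1 := by
        ext x; simp
      rw [hml, map_one]
      rfl
    · rw [dif_neg hχ]
  · rw [dif_neg hs]

lemma mk_F_succ {β : Ordinal.{u}} (h : β < X.κ.ord) :
    #(↥(X.F (β+1))) = #(Equiv.Perm ↥(X.F β)) := Cardinal.mk_congr (X.e β h).toEquiv

lemma card_F_ge {β : Ordinal.{u}} (h : β < X.κ.ord) [hfin : Finite ↥(X.F β)] :
    7 ≤ Nat.card ↥(X.F β) := by
  have hle : X.F 0 ≤ X.F β := Fle X zero_le h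
  have hinj : Function.Injective (fun x : ↥(X.F 0) => (⟨(x : G), hle x.2⟩ : ↥(X.F β))) := by
    intro a b hab
    apply Subtype.ext
    have h0 := hab
    simp only [Subtype.mk.injEq] at h0
    exact h0
  have := X.h0
  calc 7 ≤ Nat.card ↥(X.F 0) := X.h0
    _ ≤ Nat.card ↥(X.F β) := Nat.card_le_card_of_injective _ hinj

lemma mk_F_lt {β : Ordinal.{u}} (h : β < X.κ.ord) : #(↥(X.F β)) < #(↥(X.F (β+1))) := by
  rw [mk_F_succ X h]
  apply mk_lt_mk_perm
  rcases finite_or_infinite ↥(X.F β) with hf | hi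
  · left
    have := card_F_ge X h
    omega
  · right; exact hi

lemma mk_F_le {α β : Ordinal.{u}} (hab : α ≤ β) (h : β < X.κ.ord) :
    #(↥(X.F α)) ≤ #(↥(X.F β)) := by
  have hle : X.F α ≤ X.F β := Fle X hab h
  exact Cardinal.mk_le_mk_of_subset hle

lemma mk_F_lt_of_lt {α β : Ordinal.{u}} (hab : α < β) (h : β < X.κ.ord) :
    #(↥(X.F α)) < #(↥(X.F β)) := by
  have h1 : α < X.κ.ord := lt_trans hab h
  have h2 : α + 1 ≤ β := by
    rw [Ordinal.add_one_eq_succ, Order.succ_le_iff]; exact hab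
  exact lt_of_lt_of_le (mk_F_lt X h1) (mk_F_le X h2 h)

lemma exists_nat_chain (α : Ordinal.{u}) (hωα : Ordinal.omega0 ≤ α) (hα : α < X.κ.ord) :
    ∃ f : ℕ → ↥(X.F α), Function.Injective f := by
  have hn : ∀ n : ℕ, ((n : Ordinal.{u}) + 1) < X.κ.ord := by
    intro n
    have h1 : ((n : Ordinal.{u}) + 1) < Ordinal.omega0 := by
      have := Ordinal.nat_lt_omega0 (n + 1)
      simpa [Nat.cast_add] using this
    exact lt_trans (lt_of_lt_of_le h1 hωα) hα
  have hnew : ∀ n : ℕ, ∃ x : G, x ∈ X.F ((n : Ordinal.{u}) + 1) ∧ x ∉ X.F (n : Ordinal.{u}) := by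
    intro n
    by_contra hcon
    push_neg at hcon
    have hsub : X.F ((n : Ordinal.{u}) + 1) ≤ X.F (n : Ordinal.{u}) := by
      intro x hx; exact hcon x hx
    have hsub2 : #(↥(X.F ((n : Ordinal.{u}) + 1))) ≤ #(↥(X.F (n : Ordinal.{u}))) :=
      Cardinal.mk_le_mk_of_subset hsub
    have := mk_F_lt X (lt_trans (lt_of_lt_of_le (by exact_mod_cast Ordinal.nat_lt_omega0 n) hωα) hα)
    exact absurd hsub2 (not_le_of_gt this)
  choose xf hx1 hx2 using hnew
  refine ⟨fun n => ⟨xf n, ?_⟩, ?_⟩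
  · refine Fle X ?_ hα (hx1 n)
    calc ((n : Ordinal.{u}) + 1) ≤ Ordinal.omega0 := by
          have := Ordinal.nat_lt_omega0 (n+1)
          have h2 : ((n : Ordinal.{u}) + 1) = ((n+1 : ℕ) : Ordinal.{u}) := by
            simp [Nat.cast_add]
          rw [h2]
          exact le_of_lt this
      _ ≤ α := hωα
  · intro a b hab
    have hval : xf a = xf b := by
      have h0 := hab
      simp only [Subtype.mk.injEq] at h0
      exact h0
    have hwlog : ∀ a b : ℕ, a < b → xf a = xf b → False := by
      intro a b hl hv
      have hna : ((a : Ordinal.{u}) + 1) ≤ (b : Ordinal.{u}) := by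
        have h1 : ((a+1 : ℕ) : Ordinal.{u}) ≤ ((b : ℕ) : Ordinal.{u}) := by
          have := Nat.succ_le_of_lt hl
          exact_mod_cast this
        simpa [Nat.cast_add] using h1
      have hbκ : ((b : ℕ) : Ordinal.{u}) < X.κ.ord :=
        lt_trans (lt_of_lt_of_le (Ordinal.nat_lt_omega0 b) hωα) hα
      have hmem : xf a ∈ X.F ((b : ℕ) : Ordinal.{u}) := Fle X hna hbκ (hx1 a)
      rw [hv] at hmem
      exact hx2 b hmem
    rcases Nat.lt_trichotomy a b with h | h | h
    · exact absurd hval (fun hv => hwlog a b h hv)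
    · exact h
    · exact absurd hval.symm (fun hv => hwlog b a h hv)

lemma infinite_F {α : Ordinal.{u}} (hωα : Ordinal.omega0 ≤ α) (hα : α < X.κ.ord) :
    Infinite ↥(X.F α) := by
  obtain ⟨f, hf⟩ := exists_nat_chain X α hωα hα
  exact Infinite.of_injective f hf

lemma mk_le_mk_quotient {W : Type v} [Group W] [Infinite W] (S : Subgroup W)
    (hS : #(↥S) < #W) : #W ≤ #(W ⧸ S) := by
  have heq : #W = #(W ⧸ S) * #(↥S) :=
    Cardinal.mk_congr (Subgroup.groupEquivQuotientProdSubgroup)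
  by_contra hcon
  push_neg at hcon
  have hlt := Cardinal.mul_lt_of_lt (Cardinal.infinite_iff.1 inferInstance) hcon hS
  rw [← heq] at hlt
  exact lt_irrefl _ hlt

def cayleyHom (H : Type v) [Group H] : H →* Equiv.Perm H where
  toFun := Equiv.mulLeft
  map_one' := by ext x; simp
  map_mul' := by intro a b; exact mulLeft_hom a b

lemma cayleyHom_injective (H : Type v) [Group H] : Function.Injective (cayleyHom H) := by
  intro a b hab
  have := congrArg (fun σ : Equiv.Perm H => σ 1) hab
  simpa [cayleyHom] using this

lemma commute_esymm {β : Ordinal.{u}} (h : β < X.κ.ord) (A B : Equiv.Perm ↥(X.F β))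
    (hAB : Commute A B) :
    Commute (((X.e β h).symm A : ↥(X.F (β+1))) : G) (((X.e β h).symm B : ↥(X.F (β+1))) : G) :=
  (hAB.map (X.e β h).symm.toMonoidHom).map (X.F (β+1)).subtype

lemma exists_ne_ne_F {δ : Ordinal.{u}} (hδ : δ < X.κ.ord) (b : ↥(X.F δ)) :
    ∃ z : ↥(X.F δ), z ≠ 1 ∧ z ≠ b := by
  have hle : X.F 0 ≤ X.F δ := Fle X zero_le hδ
  have hequiv := Subgroup.subgroupOfEquivOfLe hle
  have hfin0 : Finite ↥(X.F 0) := X.h0fin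
  have hfin : Finite ↥((X.F 0).subgroupOf (X.F δ)) := Finite.of_equiv _ hequiv.symm.toEquiv
  have h7 : 7 ≤ Nat.card ↥((X.F 0).subgroupOf (X.F δ)) := by
    rw [Nat.card_congr hequiv.toEquiv]
    exact X.h0
  obtain ⟨z, _, hz1, hzb⟩ := exists_ne_ne ((X.F 0).subgroupOf (X.F δ)) h7 b
  exact ⟨z, hz1, hzb⟩

/-- a nontrivial planted element moves something in F (δ+1) -/
lemma mulLeft_not_inner_trivial {δ : Ordinal.{u}} (hδ : δ < X.κ.ord) (b : ↥(X.F δ))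
    (hb : b ≠ 1) :
    ∃ x : G, x ∈ X.F (δ+1) ∧
      ((X.e δ hδ).symm (Equiv.mulLeft b) : G) * x * (((X.e δ hδ).symm (Equiv.mulLeft b) : G))⁻¹ ≠ x := by
  obtain ⟨z, hz1, hzb⟩ := exists_ne_ne_F X hδ b
  have hbG : (b : G) ≠ 1 := by
    intro h; exact hb (by apply Subtype.ext; simpa using h)
  obtain ⟨σ, hσ⟩ := mulLeft_noncentral (b : ↥(X.F δ)) hb ⟨z, hz1, hzb⟩
  refine ⟨((X.e δ hδ).symm σ : G), ((X.e δ hδ).symm σ).2, ?_⟩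
  intro hfix
  apply hσ
  have hcomm : Commute (((X.e δ hδ).symm (Equiv.mulLeft b) : ↥(X.F (δ+1))) : G)
      (((X.e δ hδ).symm σ : ↥(X.F (δ+1))) : G) := by
    apply commute_of_conj hfix
  have hcomm2 : Commute ((X.e δ hδ).symm (Equiv.mulLeft b)) ((X.e δ hδ).symm σ) := by
    have hinj : Function.Injective ((X.F (δ+1)).subtype) := Subgroup.subtype_injective _
    unfold Commute SemiconjBy at hcomm ⊢
    apply hinj
    push_cast
    exact hcomm
  have := hcomm2.map (X.e δ hδ).toMonoidHom
  simpa [commute_iff_eq] using this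

/-- core construction of the commuting Perm copy, case with no plant -/
lemma buildV_aux {δ : Ordinal.{u}} (hδ : δ < X.κ.ord)
    (hsize : #(↥(X.F δ)) ≤ #(↥(Phi X δ)))
    (hplant1 : ∀ c, plantEl X δ (tmap X δ) c = 1) :
    ∃ V : Equiv.Perm ↥(X.F δ) →* G, Function.Injective V ∧ (∀ σ, V σ ∈ X.F (δ+1)) ∧
      ∀ σ c, Commute (V σ) (tmap X (δ+1) c) := by
  classical
  obtain ⟨emb⟩ := Cardinal.le_def _ _ |>.1 hsize
  set inner : Equiv.Perm ↥(X.F δ) →* Equiv.Perm ↥(X.F δ) :=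
    (Equiv.Perm.ofSubtype).comp (Equiv.Perm.viaEmbeddingHom emb) with hinner
  refine ⟨((X.F (δ+1)).subtype).comp (((X.e δ hδ).symm.toMonoidHom).comp inner), ?_, ?_, ?_⟩
  · apply Function.Injective.comp (Subgroup.subtype_injective _)
    apply Function.Injective.comp (X.e δ hδ).symm.injective
    apply Function.Injective.comp ofSubtype_injective
    exact Equiv.Perm.viaEmbeddingHom_injective emb
  · intro σ
    exact ((X.e δ hδ).symm (inner σ)).2
  · intro σ c
    rw [tmap_succ X δ]
    simp only []
    rw [hplant1 c, one_mul]
    unfold Epart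
    by_cases hE : Econd X δ (tmap X δ c)
    · rw [dif_pos hE]
      apply commute_esymm
      apply ofSubtype_commute_of_fixes
      intro x hx
      apply Subtype.ext
      show tmap X δ c * (x : G) * (tmap X δ c)⁻¹ = (x : G)
      have hcx : Commute (x : G) (tmap X δ c) := hx c
      rw [hcx.symm.eq]
      group
    · rw [dif_neg hE]
      exact Commute.one_right _

/-- conjugation by the inversion permutation -/
def invConj (W : Type v) [Group W] : Equiv.Perm W →* Equiv.Perm W where
  toFun σ := (Equiv.inv W) * σ * (Equiv.inv W)
  map_one' := by
    ext x
    simp [Equiv.Perm.mul_apply]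
  map_mul' σ τ := by
    ext x
    simp only [Equiv.Perm.mul_apply]
    congr 1
    simp [Equiv.inv_apply]

lemma invConj_injective (W : Type v) [Group W] : Function.Injective (invConj W) := by
  intro a b hab
  have : ∀ x, ((invConj W) a) x = ((invConj W) b) x := fun x => by rw [hab]
  ext x
  have h2 := this x⁻¹
  simp only [invConj, MonoidHom.coe_mk, OneHom.coe_mk, Equiv.Perm.mul_apply, Equiv.inv_apply] at h2
  rw [inv_inv] at h2
  exact inv_injective h2

lemma invConj_mulRight (W : Type v) [Group W] (b : W) :
    invConj W (Equiv.mulRight b⁻¹) = Equiv.mulLeft b := by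
  ext x
  simp only [invConj, MonoidHom.coe_mk, OneHom.coe_mk, Equiv.Perm.mul_apply, Equiv.inv_apply,
    Equiv.coe_mulRight, Equiv.coe_mulLeft]
  group

/-- the full wreath-style construction of the commuting Perm copy at a plant stage -/
lemma buildV {δ : Ordinal.{u}} (hδ : δ < X.κ.ord)
    (hsize : #(↥(X.F δ)) ≤ #(↥(Phi X δ))) :
    ∃ V : Equiv.Perm ↥(X.F δ) →* G, Function.Injective V ∧ (∀ σ, V σ ∈ X.F (δ+1)) ∧
      ∀ σ c, Commute (V σ) (tmap X (δ+1) c) := by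
  classical
  by_cases hs : (δ < X.κ.ord) ∧ ∃ γ, γ < X.κ.ord ∧ δ = Ordinal.omega0 + γ + 3
  swap
  · apply buildV_aux X hδ hsize
    intro c
    unfold plantEl
    rw [dif_neg hs]
  by_cases hχ : PlantCond X δ hs.2.choose (tmap X δ)
  swap
  · apply buildV_aux X hδ hsize
    intro c
    unfold plantEl
    rw [dif_pos hs, dif_neg hχ]
  -- the plant case
  set γc := hs.2.choose with hγc
  have hγcκ : γc < X.κ.ord := hs.2.choose_spec.1
  have hδform : δ = Ordinal.omega0 + γc + 3 := hs.2.choose_spec.2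
  set χ₀ := hχ.choose with hχ₀
  have hχspec := hχ.choose_spec
  -- Phi as group W, and the image subgroup S
  set W := ↥(Phi X δ) with hW
  have hWinf : Infinite W := by
    have hωδ : Ordinal.omega0 ≤ δ := by
      rw [hδform]
      calc Ordinal.omega0 ≤ Ordinal.omega0 + γc := le_self_add
        _ ≤ Ordinal.omega0 + γc + 3 := le_self_add
    have hFinf : Infinite ↥(X.F δ) := infinite_F X hωδ hδ
    exact Cardinal.infinite_iff.2 (le_trans (Cardinal.infinite_iff.1 hFinf) hsize)
  set χW : ↥(CC X γc) →* W :=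
    { toFun := fun u => ⟨⟨χ₀ u, hχspec.2.1 u⟩, fun c => hχspec.2.2 u c⟩
      map_one' := by
        apply Subtype.ext; apply Subtype.ext
        show (χ₀ 1 : G) = 1
        rw [map_one]
      map_mul' := by
        intro u v
        apply Subtype.ext; apply Subtype.ext
        show (χ₀ (u*v) : G) = (χ₀ u : G) * (χ₀ v : G)
        rw [map_mul] } with hχW
  set S : Subgroup W := χW.range with hS
  have hSsmall : #(↥S) < #W := by
    have h1 : #(↥S) ≤ #(↥(CC X γc)) := by
      have : (S : Set W) = Set.range χW := by
        rw [hS]; rfl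
      calc #(↥S) = #(↥(Set.range ⇑χW)) := Cardinal.mk_congr (Equiv.setCongr this)
        _ ≤ #(↥(CC X γc)) := Cardinal.mk_range_le
    have h2 : #(↥(CC X γc)) ≤ #(↥(X.F (γc+1))) := by
      apply Cardinal.mk_le_mk_of_subset
      intro x hx
      exact hx.1
    have h3 : #(↥(X.F (γc+1))) < #(↥(X.F δ)) := by
      apply mk_F_lt_of_lt X ?_ hδ
      rw [hδform]
      have hle : γc ≤ Ordinal.omega0 + γc := le_add_self
      have h5 : γc + 1 ≤ Ordinal.omega0 + γc + 1 := by
        exact add_le_add_left hle 1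
      have h6 : Ordinal.omega0 + γc + 1 < Ordinal.omega0 + γc + 3 := by
        rw [add_assoc, add_assoc]
        have h7 : (γc + 1) < (γc + 3) := by
          apply add_lt_add_right ?_ γc
          norm_num
        exact add_lt_add_right h7 Ordinal.omega0
      exact lt_of_le_of_lt h5 h6
    exact lt_of_le_of_lt (le_trans h1 h2) (lt_of_lt_of_le h3 hsize)
  have hquot : #(↥(X.F δ)) ≤ #(W ⧸ S) :=
    le_trans hsize (mk_le_mk_quotient S hSsmall)
  obtain ⟨jemb⟩ := Cardinal.le_def _ _ |>.1 hquot
  obtain ⟨jw, hjw_inj, hjw_eq⟩ := wreath S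
  set bigη : Equiv.Perm ↥(X.F δ) →* Equiv.Perm W :=
    ((invConj W).comp jw).comp (Equiv.Perm.viaEmbeddingHom jemb) with hbigη
  refine ⟨((X.F (δ+1)).subtype).comp (((X.e δ hδ).symm.toMonoidHom).comp
    ((Equiv.Perm.ofSubtype).comp bigη)), ?_, ?_, ?_⟩
  · apply Function.Injective.comp (Subgroup.subtype_injective _)
    apply Function.Injective.comp (X.e δ hδ).symm.injective
    apply Function.Injective.comp ofSubtype_injective
    apply Function.Injective.comp (invConj_injective W)
    apply Function.Injective.comp hjw_inj
    exact Equiv.Perm.viaEmbeddingHom_injective jemb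
  · intro σ
    exact ((X.e δ hδ).symm _).2
  · intro σ c
    rw [tmap_succ X δ]
    simp only []
    apply Commute.mul_right
    · -- commute with the plant
      unfold plantEl
      rw [dif_pos hs, dif_pos hχ]
      apply commute_esymm
      set bφ : W := χW ⟨coordG X c γc hγcκ, coordG_mem X c γc hγcκ⟩ with hbφ
      have hbeq : ((bφ : ↥(X.F δ))) = (⟨χ₀ ⟨coordG X c hs.2.choose hs.2.choose_spec.1,
          coordG_mem X c hs.2.choose hs.2.choose_spec.1⟩, hχ.choose_spec.2.1 _⟩ : ↥(X.F δ)) := by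
        rfl
      rw [← hbeq]
      apply ofSubtype_commute_mulLeft (Phi X δ) (bigη σ) bφ
      -- inside Perm W
      have hmemS : (bφ⁻¹ : W) ∈ S := S.inv_mem ⟨_, rfl⟩
      have hcomm1 : Commute (jw (Equiv.Perm.viaEmbeddingHom jemb σ)) (Equiv.mulRight ((bφ : W)⁻¹)) := by
        show _ * _ = _ * _
        ext x
        simp only [Equiv.Perm.mul_apply, Equiv.coe_mulRight]
        exact congrArg (fun w : W => ((w : ↥(X.F δ)) : G))
          (hjw_eq (Equiv.Perm.viaEmbeddingHom jemb σ) x (bφ : W)⁻¹ hmemS)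
      have hcomm2 := hcomm1.map (invConj W)
      rw [invConj_mulRight W bφ] at hcomm2
      exact hcomm2
    · -- commute with the E part
      unfold Epart
      by_cases hE : Econd X δ (tmap X δ c)
      · rw [dif_pos hE]
        apply commute_esymm
        apply ofSubtype_commute_of_fixes
        intro x hx
        apply Subtype.ext
        show tmap X δ c * (x : G) * (tmap X δ c)⁻¹ = (x : G)
        have hcx : Commute (x : G) (tmap X δ c) := hx c
        rw [hcx.symm.eq]
        group
      · rw [dif_neg hE]
        exact Commute.one_right _

def Good (β : Ordinal.{u}) : Prop :=
  β < X.κ.ord →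
    ((∀ c, tmap X β c ∈ X.F (β+1)) ∧
     (∀ c c', tmap X β (c*c') = tmap X β c * tmap X β c') ∧
     (∀ c x, x ∈ X.F β → tmap X β c * x * (tmap X β c)⁻¹ ∈ X.F β) ∧
     (∀ α, α ≤ β → ∀ c x, x ∈ X.F α →
        tmap X β c * x * (tmap X β c)⁻¹ = tmap X α c * x * (tmap X α c)⁻¹) ∧
     (∀ c, (∀ γ (hγ : γ < X.κ.ord), Ordinal.omega0 + γ + 3 + 1 ≤ β → coordG X c γ hγ = 1)
        → tmap X β c = 1) ∧
     (∀ δ, β = δ + 1 → ∃ V : Equiv.Perm ↥(X.F δ) →* G, Function.Injective V ∧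
        (∀ σ, (V σ) ∈ X.F β) ∧ (∀ σ c, Commute (V σ) (tmap X β c))) ∧
     (Order.IsSuccLimit β → #(↥(X.F β)) ≤ #(↥(Phi X β))))

lemma lt_succ_self (δ : Ordinal.{u}) : δ < δ + 1 := by
  rw [Ordinal.add_one_eq_succ]
  exact Order.lt_succ δ

lemma good_zero : Good X 0 := by
  intro hβ
  have h0 : ∀ c, tmap X 0 c = 1 := fun c => congrFun (tmap_zero X) c
  refine ⟨?_, ?_, ?_, ?_, ?_, ?_, ?_⟩
  · intro c; rw [h0]; exact Subgroup.one_mem _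
  · intro c c'; rw [h0, h0, h0, one_mul]
  · intro c x hx; rw [h0]; simpa using hx
  · intro α hα c x hx
    have : α = 0 := le_antisymm hα zero_le
    rw [this]
  · intro c _; exact h0 c
  · intro δ hδ
    exfalso
    rw [Ordinal.add_one_eq_succ] at hδ
    exact (Order.succ_ne_bot δ) hδ.symm
  · intro hlim
    exact absurd rfl hlim.pos.ne'

lemma good_succ (δ : Ordinal.{u}) (gδ : Good X δ) : Good X (δ + 1) := by
  intro hβ
  have hδκ : δ < X.κ.ord := lt_trans (lt_succ_self δ) hβ
  obtain ⟨Ga, Gb, Gc, Gd, Ge, Gf, Gg⟩ := gδ hδκ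
  have hone : tmap X δ 1 = 1 := Ge 1 (fun γ hγ _ => rfl)
  have hinv : ∀ c, tmap X δ c⁻¹ = (tmap X δ c)⁻¹ := by
    intro c
    have h2 := Gb c⁻¹ c
    rw [inv_mul_cancel, hone] at h2
    exact eq_inv_of_mul_eq_one_left h2.symm
  have hEcond : ∀ c, Econd X δ (tmap X δ c) := by
    intro c
    refine ⟨hδκ, fun x hx => ⟨Gc c x hx, ?_⟩⟩
    have h3 := Gc c⁻¹ x hx
    rw [hinv c] at h3
    simpa using h3
  have hT : ∀ c, tmap X (δ+1) c = plantEl X δ (tmap X δ) c * Epart X δ (tmap X δ c) :=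
    fun c => congrFun (tmap_succ X δ) c
  refine ⟨?_, ?_, ?_, ?_, ?_, ?_, ?_⟩
  · -- membership
    intro c
    exact Fle X (le_of_lt (lt_succ_self (δ+1))) (succ_lt X hβ) (tmap_succ_mem X δ c)
  · -- multiplicativity
    intro c c'
    rw [hT, hT, hT, plantEl_mul, Gb c c', Epart_mul X _ _ (hEcond c) (hEcond c')]
    have hsw := (plantEl_commute_Epart X δ (tmap X δ) c' c).eq
    calc plantEl X δ (tmap X δ) c * plantEl X δ (tmap X δ) c' *
          (Epart X δ (tmap X δ c) * Epart X δ (tmap X δ c'))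
        = plantEl X δ (tmap X δ) c * (plantEl X δ (tmap X δ) c' * Epart X δ (tmap X δ c)) *
          Epart X δ (tmap X δ c') := by group
      _ = plantEl X δ (tmap X δ) c * (Epart X δ (tmap X δ c) * plantEl X δ (tmap X δ) c') *
          Epart X δ (tmap X δ c') := by rw [hsw]
      _ = plantEl X δ (tmap X δ) c * Epart X δ (tmap X δ c) *
          (plantEl X δ (tmap X δ) c' * Epart X δ (tmap X δ c')) := by group
  · -- normalization
    intro c x hx
    have hmem := tmap_succ_mem X δ c
    exact mul_mem (mul_mem hmem hx) (inv_mem hmem)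
  · -- coherence
    intro α hα c x hx
    rcases eq_or_lt_of_le hα with heq | hlt
    · rw [heq]
    · have hαδ : α ≤ δ := by
        rw [Ordinal.add_one_eq_succ] at hlt
        exact Order.lt_succ_iff.1 hlt
      have hxδ : x ∈ X.F δ := Fle X hαδ hδκ hx
      have hE := Epart_conj X (tmap X δ c) (hEcond c) x hxδ
      have hy : tmap X δ c * x * (tmap X δ c)⁻¹ ∈ X.F δ := Gc c x hxδ
      rw [hT c, mul_inv_rev]
      have hgr : plantEl X δ (tmap X δ) c * Epart X δ (tmap X δ c) * x *
            ((Epart X δ (tmap X δ c))⁻¹ * (plantEl X δ (tmap X δ) c)⁻¹)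
          = plantEl X δ (tmap X δ) c *
            (Epart X δ (tmap X δ c) * x * (Epart X δ (tmap X δ c))⁻¹) *
            (plantEl X δ (tmap X δ) c)⁻¹ := by group
      rw [hgr, hE, plantEl_conj X δ (tmap X δ) c _ hy]
      exact Gd α hαδ c x hx
  · -- triviality
    intro c hc
    rw [hT]
    have h1 : plantEl X δ (tmap X δ) c = 1 := by
      apply plantEl_eq_one_of_coord_one
      intro γ hγ hform
      apply hc γ hγ
      rw [hform]
    have h2 : tmap X δ c = 1 := by
      apply Ge
      intro γ hγ hle
      exact hc γ hγ (le_trans hle (le_of_lt (lt_succ_self δ)))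
    rw [h1, h2, Epart_one, one_mul]
  · -- V existence
    intro δ' hδ'
    have hδδ' : δ' = δ := by
      rw [Ordinal.add_one_eq_succ, Ordinal.add_one_eq_succ] at hδ'
      exact (Order.succ_injective hδ').symm
    subst hδδ'
    have hsize : #(↥(X.F δ')) ≤ #(↥(Phi X δ')) := by
      rcases Ordinal.zero_or_succ_or_isSuccLimit δ' with h0 | ⟨δ₀, hδ₀⟩ | hl
      · subst h0
        apply Cardinal.mk_le_of_injective
          (f := fun x : ↥(X.F 0) => (⟨x, fun c => by
            rw [congrFun (tmap_zero X) c]; exact Commute.one_right _⟩ : ↥(Phi X 0)))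
        intro a b hab
        exact congrArg (fun z => z.1) hab
      · replace hδ₀ := hδ₀.symm
        rw [← Ordinal.add_one_eq_succ] at hδ₀
        obtain ⟨V, hVinj, hVmem, hVcomm⟩ := Gf δ₀ hδ₀
        have h1 : #(Equiv.Perm ↥(X.F δ₀)) ≤ #(↥(Phi X δ')) := by
          apply Cardinal.mk_le_of_injective
            (f := fun σ => (⟨⟨V σ, hVmem σ⟩, fun c => hVcomm σ c⟩ : ↥(Phi X δ')))
          intro a b hab
          apply hVinj
          exact congrArg (fun z => z.1.1) hab
        have h2 : #(↥(X.F δ')) = #(Equiv.Perm ↥(X.F δ₀)) := by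
          rw [hδ₀]
          exact mk_F_succ X (lt_trans (by rw [hδ₀] at hδκ; exact lt_of_lt_of_le (lt_succ_self δ₀) (le_of_eq rfl)) (by rw [← hδ₀]; exact hδκ))
        rw [h2]
        exact h1
      · exact Gg hl
    exact buildV X hδκ hsize
  · -- not a limit
    intro hlim
    exfalso
    rw [Ordinal.add_one_eq_succ] at hlim
    exact Order.not_isSuccLimit_succ _ hlim

lemma good_limit (lam : Ordinal.{u}) (hlam : Order.IsSuccLimit lam) (IH : ∀ α, α < lam → Good X α) :
    Good X lam := by
  intro hβ
  have hκα : ∀ α, α < lam → α < X.κ.ord := fun α hα => lt_trans hα hβ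
  -- accessors to lower-stage invariants
  have iGa : ∀ α (hα : α < lam) c, tmap X α c ∈ X.F (α+1) :=
    fun α hα c => ((IH α hα) (hκα α hα)).1 c
  have iGb : ∀ α (hα : α < lam) c c', tmap X α (c*c') = tmap X α c * tmap X α c' :=
    fun α hα c c' => ((IH α hα) (hκα α hα)).2.1 c c'
  have iGc : ∀ α (hα : α < lam) c x, x ∈ X.F α → tmap X α c * x * (tmap X α c)⁻¹ ∈ X.F α :=
    fun α hα c x hx => ((IH α hα) (hκα α hα)).2.2.1 c x hx
  have iGd : ∀ α (hα : α < lam) α', α' ≤ α → ∀ c x, x ∈ X.F α' →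
      tmap X α c * x * (tmap X α c)⁻¹ = tmap X α' c * x * (tmap X α' c)⁻¹ :=
    fun α hα => ((IH α hα) (hκα α hα)).2.2.2.1
  have iGe : ∀ α (hα : α < lam) c,
      (∀ γ (hγ : γ < X.κ.ord), Ordinal.omega0 + γ + 3 + 1 ≤ α → coordG X c γ hγ = 1)
      → tmap X α c = 1 :=
    fun α hα => ((IH α hα) (hκα α hα)).2.2.2.2.1
  have iGf : ∀ α (hα : α < lam) δ, α = δ + 1 → ∃ V : Equiv.Perm ↥(X.F δ) →* G,
      Function.Injective V ∧ (∀ σ, (V σ) ∈ X.F α) ∧ (∀ σ c, Commute (V σ) (tmap X α c)) :=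
    fun α hα => ((IH α hα) (hκα α hα)).2.2.2.2.2.1
  have ione : ∀ α (hα : α < lam), tmap X α 1 = 1 :=
    fun α hα => iGe α hα 1 (fun γ hγ _ => rfl)
  have iinv : ∀ α (hα : α < lam) c, tmap X α c⁻¹ = (tmap X α c)⁻¹ := by
    intro α hα c
    have h2 := iGb α hα c⁻¹ c
    rw [inv_mul_cancel, ione α hα] at h2
    exact eq_inv_of_mul_eq_one_left h2.symm
  have hlevel : ∀ x : ↥(X.F lam), ∃ α, α < lam ∧ (x : G) ∈ X.F α := by
    intro x
    have := (X.hlim lam hβ hlam (x : G)).1 x.2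
    obtain ⟨α, hα, hmem⟩ := this
    exact ⟨α, hα, hmem⟩
  -- canonical form of rawGlue
  have hraw : ∀ (c : PP X) (x : ↥(X.F lam)) (α) (hα : α < lam), (x : G) ∈ X.F α →
      ((rawGlue X lam (fun α _ => tmap X α) c x : ↥(X.F lam)) : G)
        = tmap X α c * (x : G) * (tmap X α c)⁻¹ := by
    intro c x α hα hxα
    have hcondx : ∃ α', ∃ hα' : α' < lam, (x : G) ∈ X.F α' ∧
        tmap X α' c * (x:G) * (tmap X α' c)⁻¹ ∈ X.F lam := by
      refine ⟨α, hα, hxα, ?_⟩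
      exact Fle X (le_of_lt hα) hβ (iGc α hα c _ hxα)
    unfold rawGlue
    rw [dif_pos hcondx]
    set αc := hcondx.choose with hαc
    have hspec := hcondx.choose_spec
    obtain ⟨halc, hxαc, _⟩ := hspec
    show tmap X αc c * (x:G) * (tmap X αc c)⁻¹ = tmap X α c * (x:G) * (tmap X α c)⁻¹
    have hm : max α αc < lam := max_lt hα halc
    have h1 := iGd (max α αc) hm α (le_max_left _ _) c (x:G) hxα
    have h2 := iGd (max α αc) hm αc (le_max_right _ _) c (x:G) hxαc
    rw [← h1, ← h2]
  -- bijectivity of rawGlue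
  have hbij : ∀ c, Function.Bijective (rawGlue X lam (fun α _ => tmap X α) c) := by
    have key : ∀ (c : PP X) (x : ↥(X.F lam)),
        rawGlue X lam (fun α _ => tmap X α) c⁻¹ (rawGlue X lam (fun α _ => tmap X α) c x) = x := by
      intro c x
      obtain ⟨α, hα, hxα⟩ := hlevel x
      have hy := hraw c x α hα hxα
      have hymem : ((rawGlue X lam (fun α _ => tmap X α) c x : ↥(X.F lam)) : G) ∈ X.F α := by
        rw [hy]
        exact iGc α hα c _ hxα
      apply Subtype.ext
      rw [hraw c⁻¹ _ α hα hymem, hy, iinv α hα c]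
      group
    intro c
    apply Function.bijective_iff_has_inverse.2
    refine ⟨rawGlue X lam (fun α _ => tmap X α) c⁻¹, ?_, ?_⟩
    · intro x; exact key c x
    · intro x
      have := key c⁻¹ x
      rw [inv_inv] at this
      exact this
  -- normal form of tmap at the limit
  have hTlam : ∀ c, tmap X lam c
      = (((X.e lam hβ).symm (Equiv.ofBijective _ (hbij c))) : G) := by
    intro c
    rw [congrFun (tmap_limit X lam hlam) c]
    unfold glueEl
    rw [dif_pos ⟨hβ, hbij c⟩]
  -- multiplicativity of the permutation
  have hpermmul : ∀ c (a b : ↥(X.F lam)),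
      Equiv.ofBijective _ (hbij c) (a * b)
        = Equiv.ofBijective _ (hbij c) a * Equiv.ofBijective _ (hbij c) b := by
    intro c a b
    obtain ⟨α, hα, hxa⟩ := hlevel a
    obtain ⟨α', hα', hxb⟩ := hlevel b
    have hm : max α α' < lam := max_lt hα hα'
    have hma : (a : G) ∈ X.F (max α α') := Fle X (le_max_left _ _) (hκα _ hm) hxa
    have hmb : (b : G) ∈ X.F (max α α') := Fle X (le_max_right _ _) (hκα _ hm) hxb
    have hmab : ((a * b : ↥(X.F lam)) : G) ∈ X.F (max α α') := by
      have : ((a * b : ↥(X.F lam)) : G) = (a : G) * (b : G) := rfl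
      rw [this]; exact mul_mem hma hmb
    apply Subtype.ext
    show ((rawGlue X lam (fun α _ => tmap X α) c (a*b) : ↥(X.F lam)) : G) = _
    rw [hraw c (a*b) (max α α') hm hmab]
    have hco : ((Equiv.ofBijective _ (hbij c) a * Equiv.ofBijective _ (hbij c) b : ↥(X.F lam)) : G)
        = ((rawGlue X lam (fun α _ => tmap X α) c a : ↥(X.F lam)) : G) *
          ((rawGlue X lam (fun α _ => tmap X α) c b : ↥(X.F lam)) : G) := rfl
    rw [hco, hraw c a (max α α') hm hma, hraw c b (max α α') hm hmb]
    have : ((a * b : ↥(X.F lam)) : G) = (a : G) * (b : G) := rfl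
    rw [this]
    group
  -- coherence at the limit
  have hGd : ∀ α, α ≤ lam → ∀ c x, x ∈ X.F α →
      tmap X lam c * x * (tmap X lam c)⁻¹ = tmap X α c * x * (tmap X α c)⁻¹ := by
    intro α hα c x hx
    rcases eq_or_lt_of_le hα with heq | hlt
    · rw [heq]
    · have hxlam : x ∈ X.F lam := Fle X (le_of_lt hlt) hβ hx
      rw [hTlam c]
      rw [econj_conj X hβ _ (hpermmul c) x hxlam]
      exact hraw c ⟨x, hxlam⟩ α hlt hx
  refine ⟨?_, ?_, ?_, ?_, ?_, ?_, ?_⟩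
  · -- membership
    intro c
    rw [congrFun (tmap_limit X lam hlam) c]
    exact glueEl_mem X lam _ c
  · -- multiplicativity
    intro c c'
    rw [hTlam, hTlam, hTlam]
    have hperm : Equiv.ofBijective _ (hbij (c * c'))
        = Equiv.ofBijective _ (hbij c) * Equiv.ofBijective _ (hbij c') := by
      ext x
      obtain ⟨α, hα, hxα⟩ := hlevel x
      show ((rawGlue X lam (fun α _ => tmap X α) (c*c') x : ↥(X.F lam)) : G) = _
      rw [hraw (c*c') x α hα hxα]
      have h1 : ((rawGlue X lam (fun α _ => tmap X α) c' x : ↥(X.F lam)) : G) ∈ X.F α := by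
        rw [hraw c' x α hα hxα]
        exact iGc α hα c' _ hxα
      have h2 : (((Equiv.ofBijective _ (hbij c)) ((Equiv.ofBijective _ (hbij c')) x) : ↥(X.F lam)) : G)
          = tmap X α c * (tmap X α c' * (x:G) * (tmap X α c')⁻¹) * (tmap X α c)⁻¹ := by
        have e1 : ((Equiv.ofBijective _ (hbij c')) x) = rawGlue X lam (fun α _ => tmap X α) c' x := rfl
        rw [e1]
        have e2 : ((Equiv.ofBijective _ (hbij c)) (rawGlue X lam (fun α _ => tmap X α) c' x))
            = rawGlue X lam (fun α _ => tmap X α) c (rawGlue X lam (fun α _ => tmap X α) c' x) := rfl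
        rw [e2, hraw c _ α hα h1, hraw c' x α hα hxα]
      rw [iGb α hα c c']
      rw [Equiv.Perm.mul_apply]
      rw [h2]
      group
    rw [hperm, map_mul]
    push_cast
    rfl
  · -- normalization
    intro c x hx
    rw [hTlam c, econj_conj X hβ _ (hpermmul c) x hx]
    exact (Equiv.ofBijective _ (hbij c) ⟨x, hx⟩).2
  · exact hGd
  · -- triviality
    intro c hc
    rw [hTlam c]
    have hperm1 : Equiv.ofBijective _ (hbij c) = 1 := by
      ext x
      obtain ⟨α, hα, hxα⟩ := hlevel x
      show ((rawGlue X lam (fun α _ => tmap X α) c x : ↥(X.F lam)) : G) = ((x : ↥(X.F lam)) : G)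
      rw [hraw c x α hα hxα]
      have ht1 : tmap X α c = 1 := by
        apply iGe α hα
        intro γ hγ hle
        exact hc γ hγ (le_trans hle (le_of_lt hα))
      rw [ht1]
      group
    rw [hperm1, map_one]
    rfl
  · -- V existence: vacuous, limit is not a successor
    intro δ hδ
    exfalso
    rw [Ordinal.add_one_eq_succ] at hδ
    rw [hδ] at hlam
    exact Order.not_isSuccLimit_succ _ hlam
  · -- the size invariant at the limit
    intro _
    -- transfer of commutation to the limit
    have hPhiTrans : ∀ (y : G), y ∈ X.F lam →
        (∀ c, tmap X lam c * y * (tmap X lam c)⁻¹ = y) → ∀ c, Commute y (tmap X lam c) := by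
      intro y hy hfix c
      exact (commute_of_conj (hfix c)).symm
    -- each successor level embeds into Phi lam
    have hVlam : ∀ α, α < lam → ∃ V : Equiv.Perm ↥(X.F α) →* G, Function.Injective V ∧
        (∀ σ, (V σ) ∈ X.F (α+1)) ∧ (∀ σ c, Commute (V σ) (tmap X lam c)) := by
      intro α hα
      have hα1 : α + 1 < lam := by
        rw [Ordinal.add_one_eq_succ]
        exact hlam.succ_lt hα
      obtain ⟨V, hVinj, hVmem, hVcomm⟩ := iGf (α+1) hα1 α rfl
      refine ⟨V, hVinj, hVmem, ?_⟩
      intro σ c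
      apply (hPhiTrans (V σ) (Fle X (le_of_lt hα1) hβ (hVmem σ)) ?_ c).symm.symm
      intro c'
      rw [hGd (α+1) (le_of_lt hα1) c' (V σ) (hVmem σ)]
      have h8 := (hVcomm σ c').symm.eq
      rw [h8]
      group
    -- part 1: each F α embeds
    have hS1 : ∀ α, α < lam → #(↥(X.F (α+1))) ≤ #(↥(Phi X lam)) := by
      intro α hα
      obtain ⟨V, hVinj, hVmem, hVcomm⟩ := hVlam α hα
      have hα1 : α + 1 < lam := by
        rw [Ordinal.add_one_eq_succ]; exact hlam.succ_lt hα
      have h1 : #(Equiv.Perm ↥(X.F α)) ≤ #(↥(Phi X lam)) := by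
        apply Cardinal.mk_le_of_injective (f := fun σ =>
          (⟨⟨V σ, Fle X (le_of_lt hα1) hβ (hVmem σ)⟩, fun c => hVcomm σ c⟩ : ↥(Phi X lam)))
        intro a b hab
        apply hVinj
        exact congrArg (fun z => z.1.1) hab
      rw [mk_F_succ X (hκα α hα)]
      exact h1
    have hS1' : ∀ α, α < lam → #(↥(X.F α)) ≤ #(↥(Phi X lam)) := by
      intro α hα
      exact le_trans (le_of_lt (mk_F_lt X (hκα α hα))) (hS1 α hα)
    -- part 2: the index set embeds via toType
    set eio := (Ordinal.ToType.mk (o := lam)).symm with heio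
    have hS2 : #(lam.ToType) ≤ #(↥(Phi X lam)) := by
      have hw : ∀ α (hα : α < lam), ∃ w : G, w ∈ X.F (α+1) ∧ w ∉ X.F α ∧
          ∀ c, Commute w (tmap X lam c) := by
        intro α hα
        obtain ⟨V, hVinj, hVmem, hVcomm⟩ := hVlam α hα
        have hx : ∃ σ, V σ ∉ X.F α := by
          by_contra hcon
          push_neg at hcon
          have h9 : #(Equiv.Perm ↥(X.F α)) ≤ #(↥(X.F α)) := by
            apply Cardinal.mk_le_of_injective (f := fun σ => (⟨V σ, hcon σ⟩ : ↥(X.F α)))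
            intro a b hab
            apply hVinj
            simpa [Subtype.mk.injEq] using hab
          have h2 := mk_F_lt X (hκα α hα)
          rw [mk_F_succ X (hκα α hα)] at h2
          exact absurd h9 (not_le_of_gt h2)
        obtain ⟨σ, hσ⟩ := hx
        exact ⟨V σ, hVmem σ, hσ, fun c => hVcomm σ c⟩
      choose w hw1 hw2 hw3 using hw
      apply Cardinal.mk_le_of_injective (f := fun i : lam.ToType =>
        (⟨⟨w (eio i).1 (eio i).2, by
            have hp1 : (eio i).1 + 1 < lam := by
              rw [Ordinal.add_one_eq_succ]; exact hlam.succ_lt (eio i).2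
            exact Fle X (le_of_lt hp1) hβ (hw1 (eio i).1 (eio i).2)⟩,
          fun c => hw3 (eio i).1 (eio i).2 c⟩ : ↥(Phi X lam)))
      intro a b hab
      simp only [Subtype.mk.injEq] at hab
      have hord : (eio a) = (eio b) := by
        apply Subtype.ext
        by_contra hne
        rcases lt_or_gt_of_ne hne with hl | hl
        · have h1 : (eio a).1 + 1 ≤ (eio b).1 := by
            rw [Ordinal.add_one_eq_succ]; exact Order.succ_le_of_lt hl
          have h5 : w (eio a).1 (eio a).2 ∈ X.F (eio b).1 :=
            Fle X h1 (hκα _ (eio b).2) (hw1 _ _)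
          rw [show w (eio a).1 (eio a).2 = w (eio b).1 (eio b).2 from congrArg (fun z => z.1.1) hab] at h5
          exact hw2 _ _ h5
        · have h1 : (eio b).1 + 1 ≤ (eio a).1 := by
            rw [Ordinal.add_one_eq_succ]; exact Order.succ_le_of_lt hl
          have h5 : w (eio b).1 (eio b).2 ∈ X.F (eio a).1 :=
            Fle X h1 (hκα _ (eio a).2) (hw1 _ _)
          rw [← show w (eio a).1 (eio a).2 = w (eio b).1 (eio b).2 from congrArg (fun z => z.1.1) hab] at h5
          exact hw2 _ _ h5
      exact (Ordinal.ToType.mk (o := lam)).symm.injective hord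
    -- Phi lam is infinite
    have homlam : Ordinal.omega0 ≤ lam := Ordinal.omega0_le_of_isSuccLimit hlam
    have hM : ℵ₀ ≤ #(↥(Phi X lam)) := by
      refine le_trans ?_ hS2
      have hι : Function.Injective (fun n : ℕ =>
          (Ordinal.ToType.mk (o := lam))
            ⟨(n : Ordinal.{u}), lt_of_lt_of_le (Ordinal.nat_lt_omega0 n) homlam⟩) := by
        intro a b hab
        have := (Ordinal.ToType.mk (o := lam)).injective hab
        replace this := congrArg Subtype.val this
        simp only [Nat.cast_inj] at this
        exact this
      have h6 : Infinite lam.ToType := Infinite.of_injective _ hι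
      exact Cardinal.infinite_iff.1 h6
    -- the sum bound
    have hsum : #(↥(X.F lam)) ≤ #(lam.ToType) * #(↥(Phi X lam)) := by
      have hinj : Function.Injective (fun x : ↥(X.F lam) =>
          (⟨(Ordinal.ToType.mk (o := lam)) ⟨(hlevel x).choose, (hlevel x).choose_spec.1⟩,
            ⟨(x : G), by
              have h7 := (hlevel x).choose_spec.2
              have h8 : (eio ((Ordinal.ToType.mk (o := lam))
                  ⟨(hlevel x).choose, (hlevel x).choose_spec.1⟩)).1 = (hlevel x).choose := by
                rw [heio, OrderIso.symm_apply_apply]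
              rw [h8]
              exact h7⟩⟩ :
            Σ i : lam.ToType, ↥(X.F (eio i).1))) := by
        intro a b hab
        have h2 := congrArg (fun q : Σ i : lam.ToType, ↥(X.F (eio i).1) => ((q.2 : G))) hab
        apply Subtype.ext
        exact h2
      calc #(↥(X.F lam)) ≤ #(Σ i : lam.ToType, ↥(X.F (eio i).1)) :=
            Cardinal.mk_le_of_injective hinj
        _ = Cardinal.sum (fun i : lam.ToType => #(↥(X.F (eio i).1))) := Cardinal.mk_sigma _
        _ ≤ Cardinal.sum (fun _ : lam.ToType => #(↥(Phi X lam))) :=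
            Cardinal.sum_le_sum _ _ (fun i => hS1' (eio i).1 (eio i).2)
        _ = #(lam.ToType) * #(↥(Phi X lam)) := by
            rw [Cardinal.sum_const']
    calc #(↥(X.F lam)) ≤ #(lam.ToType) * #(↥(Phi X lam)) := hsum
      _ ≤ #(↥(Phi X lam)) * #(↥(Phi X lam)) := mul_le_mul' hS2 (le_refl _)
      _ = #(↥(Phi X lam)) := Cardinal.mul_eq_self hM

lemma good_all : ∀ β, Good X β := by
  intro β
  induction β using Ordinal.induction with
  | _ β IH =>
    rcases Ordinal.zero_or_succ_or_isSuccLimit β with h0 | ⟨δ, hδ⟩ | hl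
    · rw [h0]; exact good_zero X
    · replace hδ := hδ.symm
      rw [hδ, ← Ordinal.add_one_eq_succ]
      apply good_succ X δ
      apply IH
      rw [hδ]
      exact Order.lt_succ δ
    · exact good_limit X β hl (fun α hα => IH α hα)

lemma coordG_congr (c : PP X) {γ γ' : Ordinal.{u}} (h : γ = γ') (hγ : γ < X.κ.ord)
    (hγ' : γ' < X.κ.ord) : coordG X c γ hγ = coordG X c γ' hγ' := by
  subst h
  rfl

lemma plantCond_holds (γ : Ordinal.{u}) (hγ : γ < X.κ.ord) :
    PlantCond X (Ordinal.omega0 + γ + 3) γ (tmap X (Ordinal.omega0 + γ + 3)) := by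
  have hδκ : Ordinal.omega0 + γ + 3 < X.κ.ord := sched_lt X hγ
  have hform : Ordinal.omega0 + γ + 3 = (Ordinal.omega0 + γ + 2) + 1 := by
    rw [sched_succ_form, Ordinal.add_one_eq_succ]
  obtain ⟨V, hVinj, hVmem, hVcomm⟩ :=
    ((good_all X (Ordinal.omega0 + γ + 3)) hδκ).2.2.2.2.2.1 (Ordinal.omega0 + γ + 2) hform
  have hmid : Ordinal.omega0 + γ + 2 < X.κ.ord := by
    apply lt_trans ?_ hδκ
    rw [hform]
    exact lt_succ_self _
  have hle : CC X γ ≤ X.F (Ordinal.omega0 + γ + 2) := by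
    intro x hx
    have h1 : x ∈ X.F (γ + 1) := hx.1
    apply Fle X ?_ hmid h1
    have h2 : γ ≤ Ordinal.omega0 + γ := le_add_self
    calc γ + 1 ≤ Ordinal.omega0 + γ + 1 := add_le_add_left h2 1
      _ ≤ Ordinal.omega0 + γ + 2 := by
          apply add_le_add_right ?_ (Ordinal.omega0 + γ)
          norm_num
  have hincl : Function.Injective (Subgroup.inclusion hle) := Subgroup.inclusion_injective hle
  set emb : ↥(CC X γ) ↪ ↥(X.F (Ordinal.omega0 + γ + 2)) := ⟨Subgroup.inclusion hle, hincl⟩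
  refine ⟨V.comp ((Equiv.Perm.viaEmbeddingHom emb).comp (cayleyHom ↥(CC X γ))), ?_, ?_, ?_⟩
  · apply Function.Injective.comp hVinj
    apply Function.Injective.comp (Equiv.Perm.viaEmbeddingHom_injective emb)
    exact cayleyHom_injective _
  · intro u
    exact hVmem _
  · intro u c
    exact hVcomm _ c

lemma detect (c : PP X) (γ₀ : Ordinal.{u}) (hγ₀ : γ₀ < X.κ.ord)
    (hne : coordG X c γ₀ hγ₀ ≠ 1)
    (hmin : ∀ γ (hγ : γ < X.κ.ord), γ < γ₀ → coordG X c γ hγ = 1) :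
    ∃ x : G, ∃ β, β < X.κ.ord ∧ x ∈ X.F β ∧
      tmap X β c * x * (tmap X β c)⁻¹ ≠ x := by
  set δ := Ordinal.omega0 + γ₀ + 3 with hδdef
  have hδκ : δ < X.κ.ord := sched_lt X hγ₀
  have hδ1κ : δ + 1 < X.κ.ord := succ_lt X hδκ
  have ht1 : tmap X δ c = 1 := by
    apply ((good_all X δ) hδκ).2.2.2.2.1
    intro γ hγ hle
    apply hmin γ hγ
    by_contra hcon
    push_neg at hcon
    have h1 : Ordinal.omega0 + γ₀ + 3 ≤ Ordinal.omega0 + γ + 3 :=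
      add_le_add_left (add_le_add_right hcon _) 3
    have h2 : Ordinal.omega0 + γ + 3 < Ordinal.omega0 + γ + 3 + 1 := lt_succ_self _
    exact lt_irrefl _ (lt_of_le_of_lt h1 (lt_of_lt_of_le h2 hle))
  have hE1 : Epart X δ (tmap X δ c) = 1 := by rw [ht1]; exact Epart_one X
  have hsprop : (δ < X.κ.ord) ∧ ∃ γ, γ < X.κ.ord ∧ δ = Ordinal.omega0 + γ + 3 :=
    ⟨hδκ, γ₀, hγ₀, rfl⟩
  have hγc : hsprop.2.choose = γ₀ := sched_unique (hsprop.2.choose_spec.2).symm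
  have hPC : PlantCond X δ hsprop.2.choose (tmap X δ) := by
    rw [hγc]
    exact plantCond_holds X γ₀ hγ₀
  set b : ↥(X.F δ) := ⟨hPC.choose ⟨coordG X c hsprop.2.choose hsprop.2.choose_spec.1,
      coordG_mem X c _ _⟩, hPC.choose_spec.2.1 _⟩ with hbdef
  have hplant : plantEl X δ (tmap X δ) c = ((X.e δ hδκ).symm (Equiv.mulLeft b) : G) := by
    unfold plantEl
    rw [dif_pos hsprop, dif_pos hPC]
  have hbne : b ≠ 1 := by
    intro h1
    have h2 : hPC.choose ⟨coordG X c hsprop.2.choose hsprop.2.choose_spec.1,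
        coordG_mem X c _ _⟩ = 1 := by
      have := congrArg Subtype.val h1
      exact this
    have h3 : (⟨coordG X c hsprop.2.choose hsprop.2.choose_spec.1,
        coordG_mem X c _ _⟩ : ↥(CC X hsprop.2.choose)) = 1 := by
      apply hPC.choose_spec.1
      rw [h2, map_one]
    apply hne
    rw [← coordG_congr X c hγc hsprop.2.choose_spec.1 hγ₀]
    exact congrArg Subtype.val h3
  obtain ⟨x, hxmem, hxne⟩ := mulLeft_not_inner_trivial X hδκ b hbne
  refine ⟨x, δ + 1, hδ1κ, hxmem, ?_⟩
  rw [congrFun (tmap_succ X δ) c]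
  rw [hE1, mul_one, hplant]
  exact hxne

noncomputable def lvl (g : G) : Ordinal.{u} := (X.hunion g).choose

lemma lvl_lt (g : G) : lvl X g < X.κ.ord := (X.hunion g).choose_spec.1

lemma lvl_mem (g : G) : g ∈ X.F (lvl X g) := (X.hunion g).choose_spec.2

noncomputable def app (c : PP X) (g : G) : G :=
  tmap X (lvl X g) c * g * (tmap X (lvl X g) c)⁻¹

lemma app_eq (c : PP X) (g : G) (β : Ordinal.{u}) (hβ : β < X.κ.ord) (hg : g ∈ X.F β) :
    app X c g = tmap X β c * g * (tmap X β c)⁻¹ := by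
  have hμ : max β (lvl X g) < X.κ.ord := max_lt hβ (lvl_lt X g)
  have h1 := ((good_all X (max β (lvl X g))) hμ).2.2.2.1 β (le_max_left _ _) c g hg
  have h2 := ((good_all X (max β (lvl X g))) hμ).2.2.2.1 (lvl X g) (le_max_right _ _) c g
    (lvl_mem X g)
  unfold app
  rw [← h2, h1]

lemma app_mul_arg (c : PP X) (g h : G) : app X c (g * h) = app X c g * app X c h := by
  set μ := max (max (lvl X g) (lvl X h)) (lvl X (g*h)) with hμdef
  have hμ : μ < X.κ.ord := max_lt (max_lt (lvl_lt X g) (lvl_lt X h)) (lvl_lt X (g*h))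
  have hg : g ∈ X.F μ :=
    Fle X (le_trans (le_max_left _ _) (le_max_left _ _)) hμ (lvl_mem X g)
  have hh : h ∈ X.F μ :=
    Fle X (le_trans (le_max_right _ _) (le_max_left _ _)) hμ (lvl_mem X h)
  rw [app_eq X c (g*h) μ hμ (mul_mem hg hh), app_eq X c g μ hμ hg, app_eq X c h μ hμ hh]
  group

lemma app_mul_c (c c' : PP X) (g : G) : app X (c * c') g = app X c (app X c' g) := by
  have hβ := lvl_lt X g
  have hg := lvl_mem X g
  have hy : app X c' g ∈ X.F (lvl X g) := by
    rw [app_eq X c' g (lvl X g) hβ hg]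
    exact ((good_all X (lvl X g)) hβ).2.2.1 c' g hg
  rw [app_eq X (c*c') g (lvl X g) hβ hg, app_eq X c (app X c' g) (lvl X g) hβ hy,
    app_eq X c' g (lvl X g) hβ hg]
  rw [((good_all X (lvl X g)) hβ).2.1 c c']
  group

lemma app_one (g : G) : app X 1 g = g := by
  unfold app
  have h1 := ((good_all X (lvl X g)) (lvl_lt X g)).2.2.2.2.1 1 (fun _ _ _ => rfl)
  rw [h1]
  group

noncomputable def bigAut (c : PP X) : MulAut G :=
  { toFun := app X c
    invFun := app X c⁻¹
    left_inv := fun g => by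
      rw [← app_mul_c, inv_mul_cancel]
      exact app_one X g
    right_inv := fun g => by
      rw [← app_mul_c, mul_inv_cancel]
      exact app_one X g
    map_mul' := app_mul_arg X c }

noncomputable def bigHom : PP X →* MulAut G :=
  { toFun := bigAut X
    map_one' := by
      apply MulEquiv.ext
      intro g
      exact app_one X g
    map_mul' := by
      intro c c'
      apply MulEquiv.ext
      intro g
      show app X (c * c') g = (bigAut X c) ((bigAut X c') g)
      exact app_mul_c X c c' g }

lemma bigHom_inj : Function.Injective (bigHom X) := by
  rw [injective_iff_map_eq_one]
  intro c hc
  by_contra hne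
  obtain ⟨γ, hγ, hcoord⟩ := exists_coordG_ne_one X c hne
  set s := {γ' : Ordinal.{u} | ∃ hγ' : γ' < X.κ.ord, coordG X c γ' hγ' ≠ 1} with hsdef
  have hsne : s.Nonempty := ⟨γ, hγ, hcoord⟩
  set γ₀ := WellFounded.min Ordinal.lt_wf s hsne with hγ₀def
  obtain ⟨hγ₀κ, hne₀⟩ := WellFounded.min_mem Ordinal.lt_wf s hsne
  have hminlow : ∀ γ' (hγ' : γ' < X.κ.ord), γ' < γ₀ → coordG X c γ' hγ' = 1 := by
    intro γ' hγ' hlt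
    by_contra hne'
    exact WellFounded.not_lt_min Ordinal.lt_wf s (⟨hγ', hne'⟩ : γ' ∈ s) hlt
  obtain ⟨x, β, hβκ, hxβ, hxne⟩ := detect X c γ₀ hγ₀κ hne₀ hminlow
  have hval := congrArg (fun φ : MulAut G => φ x) hc
  simp only [MulAut.one_apply] at hval
  apply hxne
  rw [← app_eq X c x β hβκ hxβ]
  exact hval

lemma bigHom_level (c : PP X) (β : Ordinal.{u}) (hβ : β + 1 < X.κ.ord) :
    (app X c) '' ((X.F (β+1) : Subgroup G) : Set G) = ((X.F (β+1) : Subgroup G) : Set G) := by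
  apply Set.Subset.antisymm
  · rintro y ⟨g, hg, rfl⟩
    rw [app_eq X c g (β+1) hβ hg]
    exact ((good_all X (β+1)) hβ).2.2.1 c g hg
  · intro y hy
    refine ⟨app X c⁻¹ y, ?_, ?_⟩
    · rw [app_eq X c⁻¹ y (β+1) hβ hy]
      exact ((good_all X (β+1)) hβ).2.2.1 c⁻¹ y hy
    · rw [← app_mul_c, mul_inv_cancel]
      exact app_one X y

lemma CC_two_le (γ : Ordinal.{u}) (hγ : γ < X.κ.ord) : 2 ≤ #(↥(CC X γ)) := by
  obtain ⟨z, hz1, _⟩ := exists_ne_ne_F X hγ 1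
  set u : G := ((X.e γ hγ).symm (Equiv.mulLeft z) : G) with hudef
  have humem : u ∈ CC X γ := mulLeft_mem_CC X hγ z
  have hune : u ≠ 1 := by
    intro h1
    have h2 : (X.e γ hγ).symm (Equiv.mulLeft z) = (1 : ↥(X.F (γ+1))) := by
      apply Subtype.ext
      exact h1
    have h3 : Equiv.mulLeft z = (1 : Equiv.Perm ↥(X.F γ)) := by
      have := congrArg (X.e γ hγ) h2
      rwa [MulEquiv.apply_symm_apply, map_one] at this
    have h4 := congrArg (fun σ : Equiv.Perm ↥(X.F γ) => σ 1) h3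
    simp only [Equiv.Perm.one_apply, Equiv.coe_mulLeft, mul_one] at h4
    exact hz1 h4
  rw [Cardinal.two_le_iff]
  exact ⟨⟨u, humem⟩, ⟨1, Subgroup.one_mem _⟩, by
    intro h
    exact hune (congrArg Subtype.val h)⟩

end Stmt18X

/-- For `G` a `κ`-existentially closed group of cardinality `κ` with all
automorphisms `κ`-inner, built as a limit of regular representations, the group of
`A`-level-preserving automorphisms (`A` = successor ordinals below `κ`) contains a
subgroup isomorphic to the product of the consecutive centralizers
`C_{G_{β+1}}(G_β)`, a product of cardinality `2^κ` when `κ` is inaccessible. -/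
theorem stmt18 (κ : Cardinal.{u}) (hκ₁ : ℵ₀ < κ) (hκ₂ : κ.IsRegular)
    (G : Type u) [Group G] (hGcard : #G = κ) (hEC : ExistentiallyClosed κ G)
    (hinner : ∀ φ : MulAut G, ∀ X : Set G, #X < κ →
      ∃ g : G, ∀ x ∈ X, φ x = g * x * g⁻¹)
    (F : Ordinal → Subgroup G)
    (hmono : ∀ α β : Ordinal, α ≤ β → β < κ.ord → F α ≤ F β)
    (hlim : ∀ γ < κ.ord, Order.IsSuccLimit γ → ∀ g : G, g ∈ F γ ↔ ∃ α < γ, g ∈ F α)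
    (hcard : ∀ α < κ.ord, #(F α) < κ)
    (hunion : ∀ g : G, ∃ α < κ.ord, g ∈ F α)
    (h0fin : Finite ↥(F 0)) (h0 : 7 ≤ Nat.card ↥(F 0))
    (hsym : ∀ α < κ.ord, ∃ e : ↥(F (α + 1)) ≃* Equiv.Perm ↥(F α),
      ∀ (g : G) (hg : g ∈ F α) (hg' : g ∈ F (α + 1)) (x : ↥(F α)),
        e ⟨g, hg'⟩ x = x * (⟨g, hg⟩ : ↥(F α))⁻¹) :
    ∃ f : ((i : κ.ord.ToType) →
        ↥(F (((Ordinal.ToType.mk (o := κ.ord)).symm i).1 + 1) ⊓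
          Subgroup.centralizer (F ((Ordinal.ToType.mk (o := κ.ord)).symm i).1 : Set G)))
        →* MulAut G,
      Function.Injective f ∧
      (∀ x, ∀ β : Ordinal, β + 1 < κ.ord →
        ⇑(f x) '' (F (β + 1) : Set G) = (F (β + 1) : Set G)) ∧
      (κ.IsInaccessible →
        #((i : κ.ord.ToType) →
          ↥(F (((Ordinal.ToType.mk (o := κ.ord)).symm i).1 + 1) ⊓
            Subgroup.centralizer (F ((Ordinal.ToType.mk (o := κ.ord)).symm i).1 : Set G)))
          = 2 ^ κ) := by
  classical
  set X : Stmt18X.Ctx G :=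
    ⟨κ, F, hκ₁, hmono, hlim, hunion, h0fin, h0,
      fun β h => (hsym β h).choose, fun β h => (hsym β h).choose_spec⟩ with hX
  refine ⟨Stmt18X.bigHom X, Stmt18X.bigHom_inj X, ?_, ?_⟩
  · intro x β hβ
    exact Stmt18X.bigHom_level X x β hβ
  · intro _
    rw [Cardinal.mk_pi]
    have hι : #(κ.ord.ToType) = κ := by
      rw [Cardinal.mk_toType, Cardinal.card_ord]
    have hcard2 : ∀ i : κ.ord.ToType,
        (2 : Cardinal.{u}) ≤ #(↥(F (((Ordinal.ToType.mk (o := κ.ord)).symm i).1 + 1) ⊓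
          Subgroup.centralizer (F ((Ordinal.ToType.mk (o := κ.ord)).symm i).1 : Set G))) := by
      intro i
      exact Stmt18X.CC_two_le X ((Ordinal.ToType.mk (o := κ.ord)).symm i).1
        ((Ordinal.ToType.mk (o := κ.ord)).symm i).2
    have hup : ∀ i : κ.ord.ToType,
        #(↥(F (((Ordinal.ToType.mk (o := κ.ord)).symm i).1 + 1) ⊓
          Subgroup.centralizer (F ((Ordinal.ToType.mk (o := κ.ord)).symm i).1 : Set G))) ≤ κ := by
      intro i
      have h1 : #(↥(F (((Ordinal.ToType.mk (o := κ.ord)).symm i).1 + 1) ⊓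
          Subgroup.centralizer (F ((Ordinal.ToType.mk (o := κ.ord)).symm i).1 : Set G)))
          ≤ #(↥(F (((Ordinal.ToType.mk (o := κ.ord)).symm i).1 + 1))) := by
        apply Cardinal.mk_le_mk_of_subset
        intro x hx
        exact hx.1
      have h2 : (((Ordinal.ToType.mk (o := κ.ord)).symm i).1 + 1) < κ.ord :=
        Stmt18X.succ_lt X ((Ordinal.ToType.mk (o := κ.ord)).symm i).2
      exact le_trans h1 (le_of_lt (hcard _ h2))
    apply le_antisymm
    · have h3 := Cardinal.prod_le_prod _ (fun _ : κ.ord.ToType => κ) hup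
      rwa [Cardinal.prod_const, Cardinal.lift_id, Cardinal.lift_id, hι,
        Cardinal.power_self_eq (le_of_lt hκ₁)] at h3
    · have h3 := Cardinal.prod_le_prod (fun _ : κ.ord.ToType => (2 : Cardinal.{u})) _ hcard2
      rwa [Cardinal.prod_const, Cardinal.lift_id, Cardinal.lift_id, hι] at h3
end
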